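/- arXiv:1807.06497 — 10 statements merged into one kernel-verified Lean document; each statement's English description precedes it below -/
import Mathlib

section
/- Let w : [0,1] → [0,1] be continuous and strictly increasing, and let v : [0,1] → ℝ≥0 be integrable with v(x) ≥ v_min > 0. Then the maximum over Borel sets S ⊆ [0,1] of the expected revenue r(S) = (∫_S v(x)w(x) dx)/(1 + ∫_S v(x) dx) is attained by a set of the form [y,1] for some y ∈ [0,1]; equivalently, max_S r(S) = max_{ρ∈[0,1]} r([w⁻¹(ρ),1]), where w⁻¹(ρ) = min{x ∈ [0,1] : w(x) ≥ ρ}. -/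
/-!
Write `g(λ) = ∫ v (w - λ)⁺`. It is Lipschitz in `λ` with `g 0 ≥ 0` and `g 1 = 0`, so it has a
fixed point `λ ∈ [0,1]`. For every assortment `S`, `∫_S v (w - λ) ≤ ∫ v (w - λ)⁺ = λ`, which after
clearing the denominator says `r(S) ≤ λ`; and on the upper level set `{w ≥ λ}` the first
inequality is an equality, so that set has revenue exactly `λ`. Since `w` is continuous and
monotone, this level set is an interval `[y, 1]` up to points where `w = λ`, which contribute
nothing.
-/

open MeasureTheory Set

lemma MonotoneOn.exists_threshold_Icc {f : ℝ → ℝ} {a b l : ℝ} (hmono : MonotoneOn f (Icc a b))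
    (hf : ContinuousOn f (Icc a b)) (hab : a ≤ b) (hl : l ≤ f b) :
    ∃ y ∈ Icc a b, (∀ x ∈ Icc y b, l ≤ f x) ∧ ∀ x ∈ Icc a b \ Icc y b, f x ≤ l := by
  rcases le_or_gt l (f a) with hla | hal
  · refine ⟨a, left_mem_Icc.2 hab, fun x hx => hla.trans ?_, fun x hx => absurd hx.1 hx.2⟩
    exact hmono (left_mem_Icc.2 hab) hx hx.1
  · obtain ⟨c, hc, rfl⟩ := intermediate_value_Icc hab hf ⟨hal.le, hl⟩
    refine ⟨c, hc, fun x hx => hmono hc ⟨hc.1.trans hx.1, hx.2⟩ hx.1, fun x hx => ?_⟩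
    exact hmono hx.1 hc (le_of_not_ge fun h => hx.2 ⟨h, hx.1.2⟩)

noncomputable section

namespace Assortment

variable {α : Type*} [MeasurableSpace α] {μ : Measure α} {A S T : Set α} {v w : α → ℝ} {l : ℝ}

def revenue (μ : Measure α) (v w : α → ℝ) (S : Set α) : ℝ :=
  (∫ x in S, v x * w x ∂μ) / (1 + ∫ x in S, v x ∂μ)

def surplus (μ : Measure α) (A : Set α) (v w : α → ℝ) (l : ℝ) : ℝ :=
  ∫ x in A, v x * max (w x - l) 0 ∂μ


lemma setIntegral_mul_sub_const (hv : IntegrableOn v S μ)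
    (hvw : IntegrableOn (fun x => v x * w x) S μ) :
    ∫ x in S, v x * (w x - l) ∂μ = (∫ x in S, v x * w x ∂μ) - l * ∫ x in S, v x ∂μ := by
  simp only [mul_sub]
  rw [integral_sub hvw (hv.mul_const l), integral_mul_const, mul_comm]

lemma revenue_sub_eq_div (hv : IntegrableOn v S μ) (hvw : IntegrableOn (fun x => v x * w x) S μ)
    (hden : 1 + ∫ x in S, v x ∂μ ≠ 0) :
    revenue μ v w S - l = ((∫ x in S, v x * (w x - l) ∂μ) - l) / (1 + ∫ x in S, v x ∂μ) := by
  rw [setIntegral_mul_sub_const hv hvw, revenue]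
  field_simp
  ring

lemma surplus_nonneg (hA : MeasurableSet A) (hv0 : ∀ x ∈ A, 0 ≤ v x) : 0 ≤ surplus μ A v w l :=
  setIntegral_nonneg hA fun x hx => mul_nonneg (hv0 x hx) (le_max_right _ _)

lemma surplus_eq_zero_of_le (hl : ∀ x ∈ A, w x ≤ l) : surplus μ A v w l = 0 :=
  setIntegral_eq_zero_of_forall_eq_zero fun x hx => by
    rw [max_eq_right (sub_nonpos.2 (hl x hx)), mul_zero]

lemma setIntegral_mul_sub_eq_surplus (hA : MeasurableSet A) (hT : MeasurableSet T) (hTA : T ⊆ A)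
    (hup : ∀ x ∈ T, l ≤ w x) (hdown : ∀ x ∈ A \ T, w x ≤ l) :
    ∫ x in T, v x * (w x - l) ∂μ = surplus μ A v w l := by
  rw [surplus, setIntegral_eq_of_subset_of_forall_sdiff_eq_zero hA hTA fun x hx => by
    rw [max_eq_right (sub_nonpos.2 (hdown x hx)), mul_zero]]
  exact setIntegral_congr_fun hT fun x hx => by rw [max_eq_left (sub_nonneg.2 (hup x hx))]

lemma one_add_setIntegral_pos (hS : MeasurableSet S) (hSA : S ⊆ A) (hv0 : ∀ x ∈ A, 0 ≤ v x) :
    0 < 1 + ∫ x in S, v x ∂μ := by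
  linarith [setIntegral_nonneg (μ := μ) hS fun x hx => hv0 x (hSA hx)]

section

variable (hA : MeasurableSet A) (hv : IntegrableOn v A μ)
  (hw : AEStronglyMeasurable w (μ.restrict A)) (hw01 : ∀ x ∈ A, w x ∈ Icc 0 1)
include hA hv hw hw01

lemma integrableOn_mul : IntegrableOn (fun x => v x * w x) A μ :=
  hv.mul_bdd hw <| (ae_restrict_mem hA).mono fun x hx =>
    abs_le.2 ⟨by linarith [(hw01 x hx).1], (hw01 x hx).2⟩

lemma integrableOn_mul_sub_const : IntegrableOn (fun x => v x * (w x - l)) A μ := by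
  simp only [mul_sub]
  exact (integrableOn_mul hA hv hw hw01).sub (hv.mul_const l)


lemma integrableOn_mul_posPart_sub_const : IntegrableOn (fun x => v x * max (w x - l) 0) A μ :=
  hv.mul_bdd (c := 1 + |l|) ((hw.sub aestronglyMeasurable_const).sup aestronglyMeasurable_const) <|
    (ae_restrict_mem hA).mono fun x hx => by
      have := (hw01 x hx).2
      rw [Real.norm_eq_abs, abs_of_nonneg (le_max_right _ _)]
      exact max_le (by linarith [neg_le_abs l]) (by positivity)

lemma lipschitzWith_surplus :
    LipschitzWith (∫ x in A, ‖v x‖ ∂μ).toNNReal (surplus μ A v w) := by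
  refine LipschitzWith.of_dist_le_mul fun a b => ?_
  rw [Real.coe_toNNReal _ (integral_nonneg fun _ => norm_nonneg _), Real.dist_eq, Real.dist_eq,
    surplus, surplus, ← integral_sub (integrableOn_mul_posPart_sub_const hA hv hw hw01)
      (integrableOn_mul_posPart_sub_const hA hv hw hw01), ← integral_mul_const, ← Real.norm_eq_abs]
  refine norm_integral_le_of_norm_le (hv.norm.mul_const _) (Filter.Eventually.of_forall fun x => ?_)
  rw [← mul_sub, norm_mul, Real.norm_eq_abs (max _ _ - _)]
  refine mul_le_mul_of_nonneg_left ?_ (norm_nonneg _)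
  simpa only [sub_sub_sub_cancel_left, abs_sub_comm b a] using
    abs_max_sub_max_le_abs (w x - a) (w x - b) 0

variable (hv0 : ∀ x ∈ A, 0 ≤ v x)
include hv0

lemma exists_surplus_eq_self : ∃ l ∈ Icc (0 : ℝ) 1, surplus μ A v w l = l := by
  have hcont : ContinuousOn (fun l => surplus μ A v w l - l) (Icc 0 1) :=
    ((lipschitzWith_surplus hA hv hw hw01).continuous.sub continuous_id).continuousOn
  have hzero : (0 : ℝ) ∈ Icc (surplus μ A v w 1 - 1) (surplus μ A v w 0 - 0) := by
    rw [surplus_eq_zero_of_le fun x hx => (hw01 x hx).2, sub_zero]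
    exact ⟨by norm_num, surplus_nonneg hA hv0⟩
  obtain ⟨l, hl, hfix⟩ := intermediate_value_Icc' zero_le_one hcont hzero
  exact ⟨l, hl, sub_eq_zero.1 hfix⟩

lemma setIntegral_mul_sub_le_surplus (hS : MeasurableSet S) (hSA : S ⊆ A) :
    ∫ x in S, v x * (w x - l) ∂μ ≤ surplus μ A v w l :=
  calc ∫ x in S, v x * (w x - l) ∂μ ≤ ∫ x in S, v x * max (w x - l) 0 ∂μ :=
        setIntegral_mono_on ((integrableOn_mul_sub_const hA hv hw hw01).mono_set hSA)
          ((integrableOn_mul_posPart_sub_const hA hv hw hw01).mono_set hSA) hS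
          fun x hx => mul_le_mul_of_nonneg_left (le_max_left _ _) (hv0 x (hSA hx))
    _ ≤ surplus μ A v w l :=
        setIntegral_mono_set (integrableOn_mul_posPart_sub_const hA hv hw hw01)
          ((ae_restrict_mem hA).mono fun x hx => mul_nonneg (hv0 x hx) (le_max_right _ _))
          hSA.eventuallyLE

lemma revenue_le_of_surplus_eq (hfix : surplus μ A v w l = l) (hS : MeasurableSet S)
    (hSA : S ⊆ A) : revenue μ v w S ≤ l := by
  have hden := one_add_setIntegral_pos hS hSA hv0 (μ := μ)
  rw [← sub_nonpos, revenue_sub_eq_div (hv.mono_set hSA)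
    ((integrableOn_mul hA hv hw hw01).mono_set hSA) hden.ne']
  refine div_nonpos_of_nonpos_of_nonneg ?_ hden.le
  linarith [setIntegral_mul_sub_le_surplus hA hv hw hw01 hv0 hS hSA (l := l)]

lemma revenue_eq_of_surplus_eq (hfix : surplus μ A v w l = l) (hT : MeasurableSet T)
    (hTA : T ⊆ A) (hup : ∀ x ∈ T, l ≤ w x) (hdown : ∀ x ∈ A \ T, w x ≤ l) :
    revenue μ v w T = l := by
  rw [← sub_eq_zero, revenue_sub_eq_div (hv.mono_set hTA)
    ((integrableOn_mul hA hv hw hw01).mono_set hTA) (one_add_setIntegral_pos hT hTA hv0).ne',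
    setIntegral_mul_sub_eq_surplus hA hT hTA hup hdown, hfix, sub_self, zero_div]

end

end Assortment

end

open Assortment

theorem stmt0 (w v : ℝ → ℝ) (vmin : ℝ)
    (hw_cont : ContinuousOn w (Icc 0 1))
    (hw_mono : StrictMonoOn w (Icc 0 1))
    (hw_range : ∀ x ∈ Icc (0:ℝ) 1, w x ∈ Icc (0:ℝ) 1)
    (hv_int : IntegrableOn v (Icc 0 1))
    (hvmin : 0 < vmin)
    (hv_lb : ∀ x ∈ Icc (0:ℝ) 1, vmin ≤ v x) :
    ∃ y ∈ Icc (0:ℝ) 1, ∀ S : Set ℝ, MeasurableSet S → S ⊆ Icc 0 1 →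
      (∫ x in S, v x * w x) / (1 + ∫ x in S, v x) ≤
        (∫ x in Icc y 1, v x * w x) / (1 + ∫ x in Icc y 1, v x) := by
  have hI : MeasurableSet (Icc (0 : ℝ) 1) := measurableSet_Icc
  have hw := hw_cont.aestronglyMeasurable hI (μ := volume)
  have hv0 : ∀ x ∈ Icc (0 : ℝ) 1, 0 ≤ v x := fun x hx => hvmin.le.trans (hv_lb x hx)
  obtain ⟨l, -, hfix⟩ := exists_surplus_eq_self hI hv_int hw hw_range hv0
  have hlw : l ≤ w 1 := by
    by_contra! hlt
    have hzero := surplus_eq_zero_of_le (μ := volume) (v := v) fun x hx =>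
      (hw_mono.monotoneOn hx (right_mem_Icc.2 zero_le_one) hx.2).trans hlt.le
    linarith [(hw_range 1 (right_mem_Icc.2 zero_le_one)).1]
  obtain ⟨y, hy, hup, hdown⟩ :=
    hw_mono.monotoneOn.exists_threshold_Icc hw_cont zero_le_one hlw
  refine ⟨y, hy, fun S hS hSI => ?_⟩
  calc revenue volume v w S ≤ l := revenue_le_of_surplus_eq hI hv_int hw hw_range hv0 hfix hS hSI
    _ = revenue volume v w (Icc y 1) :=
      (revenue_eq_of_surplus_eq hI hv_int hw hw_range hv0 hfix measurableSet_Icc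
        (Icc_subset_Icc_left hy.1) hup hdown).symm
end

section
/- Let w : [0,1] → [0,1] be continuous and strictly increasing and v : [0,1] → ℝ≥0 integrable. Define I(ρ) = ∫_{w⁻¹(ρ)}^1 v(x)(w(x) − ρ) dx for ρ ∈ [0,1], where w⁻¹(ρ) = min{x ∈ [0,1] : w(x) ≥ ρ}. Then I is continuous and non-increasing on [0,1], I(0) ≥ 0, I(1) = 0, and there exists a unique ρ* ∈ [0,1] with I(ρ*) = ρ*. Moreover ρ* equals the maximal expected revenue max_{S} r(S,v). -/
open MeasureTheory Set

theorem stmt1 (w v : ℝ → ℝ)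
    (hw_cont : ContinuousOn w (Icc 0 1))
    (hw_mono : StrictMonoOn w (Icc 0 1))
    (hw_range : ∀ x ∈ Icc (0:ℝ) 1, w x ∈ Icc (0:ℝ) 1)
    (hv_int : IntegrableOn v (Icc 0 1))
    (hv_pos : ∀ x ∈ Icc (0:ℝ) 1, 0 < v x)
    (winv : ℝ → ℝ)
    (hwinv : ∀ ρ ∈ Icc (0:ℝ) 1, IsLeast {x | x ∈ Icc (0:ℝ) 1 ∧ ρ ≤ w x} (winv ρ))
    (I : ℝ → ℝ)
    (hI : ∀ ρ, I ρ = ∫ x in Icc (winv ρ) 1, v x * (w x - ρ)) :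
    ContinuousOn I (Icc 0 1) ∧ AntitoneOn I (Icc 0 1) ∧ 0 ≤ I 0 ∧ I 1 = 0 ∧
    ∃ ρstar ∈ Icc (0:ℝ) 1, I ρstar = ρstar ∧
      (∀ ρ ∈ Icc (0:ℝ) 1, I ρ = ρ → ρ = ρstar) ∧
      IsGreatest {ρ : ℝ | ∃ S : Set ℝ, MeasurableSet S ∧ S ⊆ Icc 0 1 ∧
        (∫ x in S, v x * w x) / (1 + ∫ x in S, v x) = ρ} ρstar := by
  have hA : MeasurableSet (Icc (0:ℝ) 1) := measurableSet_Icc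
  have hwinv_mem : ∀ ρ ∈ Icc (0:ℝ) 1, winv ρ ∈ Icc (0:ℝ) 1 := fun ρ hρ => (hwinv ρ hρ).1.1
  have hwinv_le : ∀ ρ ∈ Icc (0:ℝ) 1, ρ ≤ w (winv ρ) := fun ρ hρ => (hwinv ρ hρ).1.2
  have hg_cont : ∀ ρ : ℝ, ContinuousOn (fun x => max (w x - ρ) 0) (Icc 0 1) :=
    fun ρ => (hw_cont.sub continuousOn_const).sup continuousOn_const
  have hf_int : ∀ ρ : ℝ, IntegrableOn (fun x => v x * max (w x - ρ) 0) (Icc 0 1) :=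
    fun ρ => hv_int.mul_continuousOn (hg_cont ρ) isCompact_Icc
  have hvw_int : ∀ ρ : ℝ, IntegrableOn (fun x => v x * (w x - ρ)) (Icc 0 1) :=
    fun ρ => hv_int.mul_continuousOn (hw_cont.sub continuousOn_const) isCompact_Icc
  -- key representation
  have key : ∀ ρ ∈ Icc (0:ℝ) 1, I ρ = ∫ x in Icc (0:ℝ) 1, v x * max (w x - ρ) 0 := by
    intro ρ hρ
    have hm := hwinv_mem ρ hρ
    have hsub : Icc (winv ρ) 1 ⊆ Icc (0:ℝ) 1 := Icc_subset_Icc hm.1 le_rfl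
    have hsplit : Icc (0:ℝ) 1 = Ico 0 (winv ρ) ∪ Icc (winv ρ) 1 :=
      (Ico_union_Icc_eq_Icc hm.1 hm.2).symm
    have hdisj : Disjoint (Ico (0:ℝ) (winv ρ)) (Icc (winv ρ) 1) :=
      disjoint_left.2 fun x hx hx' => hx.2.not_ge hx'.1
    rw [hI, hsplit, setIntegral_union hdisj measurableSet_Icc
        (((hf_int ρ).mono_set (by
          intro x hx; exact ⟨hx.1, hx.2.le.trans hm.2⟩)))
        ((hf_int ρ).mono_set hsub)]
    have h1 : ∫ x in Ico (0:ℝ) (winv ρ), v x * max (w x - ρ) 0 = 0 := by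
      rw [setIntegral_congr_fun measurableSet_Ico
        (g := fun _ => (0:ℝ)) ?_, integral_zero]
      intro x hx
      have hx1 : x ∈ Icc (0:ℝ) 1 := ⟨hx.1, hx.2.le.trans hm.2⟩
      have hwx : w x < ρ := by
        by_contra h
        exact absurd ((hwinv ρ hρ).2 ⟨hx1, not_lt.1 h⟩) (not_le.2 hx.2)
      simp [max_eq_right (by linarith : w x - ρ ≤ 0)]
    have h2 : ∫ x in Icc (winv ρ) 1, v x * max (w x - ρ) 0
        = ∫ x in Icc (winv ρ) 1, v x * (w x - ρ) := by
      refine setIntegral_congr_fun measurableSet_Icc fun x hx => ?_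
      have hx1 : x ∈ Icc (0:ℝ) 1 := hsub hx
      have : ρ ≤ w x := le_trans (hwinv_le ρ hρ)
        (hw_mono.monotoneOn hm hx1 hx.1)
      rw [max_eq_left (by linarith)]
    rw [h1, h2, zero_add]
  -- basic facts
  have hC_nonneg : (0:ℝ) ≤ ∫ x in Icc (0:ℝ) 1, v x :=
    setIntegral_nonneg hA fun x hx => (hv_pos x hx).le
  set C : ℝ := ∫ x in Icc (0:ℝ) 1, v x with hC
  -- continuity via Lipschitz
  have hlip : ∀ a ∈ Icc (0:ℝ) 1, ∀ b ∈ Icc (0:ℝ) 1, dist (I a) (I b) ≤ C * dist a b := by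
    intro a ha b hb
    rw [key a ha, key b hb, Real.dist_eq, Real.dist_eq,
      ← integral_sub (hf_int a) (hf_int b)]
    calc |∫ x in Icc (0:ℝ) 1, (v x * max (w x - a) 0 - v x * max (w x - b) 0)|
        ≤ ∫ x in Icc (0:ℝ) 1, |v x * max (w x - a) 0 - v x * max (w x - b) 0| :=
          by simpa [Real.norm_eq_abs] using
            norm_integral_le_integral_norm
              (μ := volume.restrict (Icc 0 1))
              (fun x => v x * max (w x - a) 0 - v x * max (w x - b) 0)
      _ ≤ ∫ x in Icc (0:ℝ) 1, v x * |a - b| := by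
          refine setIntegral_mono_on (((hf_int a).sub (hf_int b)).abs)
            (hv_int.mul_const _) hA fun x hx => ?_
          rw [← mul_sub, abs_mul, abs_of_pos (hv_pos x hx)]
          refine mul_le_mul_of_nonneg_left ?_ (hv_pos x hx).le
          calc |max (w x - a) 0 - max (w x - b) 0| ≤ |(w x - a) - (w x - b)| :=
                abs_max_sub_max_le_abs _ _ _
            _ = |a - b| := by rw [abs_sub_comm]; ring_nf
      _ = C * |a - b| := by rw [integral_mul_const, mul_comm]
  have hI_cont : ContinuousOn I (Icc 0 1) := by
    refine (LipschitzOnWith.of_dist_le_mul (K := Real.toNNReal C) ?_).continuousOn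
    intro x hx y hy
    rw [Real.coe_toNNReal C hC_nonneg]
    exact hlip x hx y hy
  -- antitone
  have hI_anti : AntitoneOn I (Icc 0 1) := by
    intro a ha b hb hab
    rw [key a ha, key b hb]
    refine setIntegral_mono_on (hf_int b) (hf_int a) hA fun x hx => ?_
    exact mul_le_mul_of_nonneg_left
      (max_le_max (by linarith) le_rfl) (hv_pos x hx).le
  -- I 0 ≥ 0
  have hI0 : 0 ≤ I 0 := by
    rw [key 0 (by norm_num)]
    exact setIntegral_nonneg hA fun x hx =>
      mul_nonneg (hv_pos x hx).le (le_max_right _ _)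
  -- I 1 = 0
  have hI1 : I 1 = 0 := by
    have h1 : (1:ℝ) ∈ Icc (0:ℝ) 1 := by norm_num
    have hm := hwinv_mem 1 h1
    rw [hI]
    rw [setIntegral_congr_fun measurableSet_Icc (g := fun _ => (0:ℝ)) ?_, integral_zero]
    intro x hx
    have hx1 : x ∈ Icc (0:ℝ) 1 := ⟨hm.1.trans hx.1, hx.2⟩
    have hle : w x ≤ 1 := (hw_range x hx1).2
    have hge : (1:ℝ) ≤ w x := le_trans (hwinv_le 1 h1) (hw_mono.monotoneOn hm hx1 hx.1)
    simp [show w x = 1 by linarith]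
  refine ⟨hI_cont, hI_anti, hI0, hI1, ?_⟩
  -- fixed point
  have hFcont : ContinuousOn (fun ρ => I ρ - ρ) (Icc 0 1) :=
    hI_cont.sub continuousOn_id
  have him := intermediate_value_Icc' (by norm_num : (0:ℝ) ≤ 1) hFcont
  have h0mem : (0:ℝ) ∈ Icc (I 1 - 1) (I 0 - 0) := by
    refine ⟨by simp [hI1], by simpa using hI0⟩
  obtain ⟨ρstar, hρs_mem, hρs_eq⟩ := him h0mem
  have hfix : I ρstar = ρstar := by linarith [sub_eq_zero.1 hρs_eq]
  refine ⟨ρstar, hρs_mem, hfix, ?_, ?_⟩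
  · -- uniqueness
    intro ρ hρ hIρ
    rcases lt_trichotomy ρ ρstar with h | h | h
    · have := hI_anti hρ hρs_mem h.le
      linarith
    · exact h
    · have := hI_anti hρs_mem hρ h.le
      linarith
  · -- IsGreatest
    have hρ01 := hρs_mem
    have hm := hwinv_mem ρstar hρ01
    have hSsub : Icc (winv ρstar) 1 ⊆ Icc (0:ℝ) 1 := Icc_subset_Icc hm.1 le_rfl
    -- expansion lemma
    have expand : ∀ S : Set ℝ, S ⊆ Icc (0:ℝ) 1 →
        ∫ x in S, v x * (w x - ρstar)
          = (∫ x in S, v x * w x) - (∫ x in S, v x) * ρstar := by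
      intro S hS
      have h1 : IntegrableOn (fun x => v x * w x) S :=
        (hv_int.mul_continuousOn hw_cont isCompact_Icc).mono_set hS
      have h2 : IntegrableOn (fun x => v x * ρstar) S :=
        (hv_int.mono_set hS).mul_const _
      calc ∫ x in S, v x * (w x - ρstar)
          = ∫ x in S, (v x * w x - v x * ρstar) := by
            congr 1; ext x; ring
        _ = (∫ x in S, v x * w x) - ∫ x in S, v x * ρstar := integral_sub h1 h2
        _ = (∫ x in S, v x * w x) - (∫ x in S, v x) * ρstar := by
            rw [integral_mul_const]
    constructor
    · -- membership
      refine ⟨Icc (winv ρstar) 1, measurableSet_Icc, hSsub, ?_⟩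
      have hfix' : ∫ x in Icc (winv ρstar) 1, v x * (w x - ρstar) = ρstar := by
        rw [← hI]; exact hfix
      rw [expand _ hSsub] at hfix'
      have hD : (0:ℝ) < 1 + ∫ x in Icc (winv ρstar) 1, v x := by
        have : (0:ℝ) ≤ ∫ x in Icc (winv ρstar) 1, v x :=
          setIntegral_nonneg measurableSet_Icc fun x hx => (hv_pos x (hSsub hx)).le
        linarith
      rw [div_eq_iff hD.ne']
      linarith
    · -- upper bound
      rintro r ⟨S, hSm, hSsub', rfl⟩
      have hvS : (0:ℝ) ≤ ∫ x in S, v x :=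
        setIntegral_nonneg hSm fun x hx => (hv_pos x (hSsub' hx)).le
      have hD : (0:ℝ) < 1 + ∫ x in S, v x := by linarith
      rw [div_le_iff₀ hD]
      have step1 : ∫ x in S, v x * (w x - ρstar)
          ≤ ∫ x in S, v x * max (w x - ρstar) 0 := by
        refine setIntegral_mono_on ((hvw_int ρstar).mono_set hSsub')
          ((hf_int ρstar).mono_set hSsub') hSm fun x hx => ?_
        exact mul_le_mul_of_nonneg_left (le_max_left _ _) (hv_pos x (hSsub' hx)).le
      have step2 : ∫ x in S, v x * max (w x - ρstar) 0
          ≤ ∫ x in Icc (0:ℝ) 1, v x * max (w x - ρstar) 0 := by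
        refine setIntegral_mono_set (hf_int ρstar) ?_ hSsub'.eventuallyLE
        refine (ae_restrict_iff' hA).2 (ae_of_all _ fun x hx => ?_)
        exact mul_nonneg (hv_pos x hx).le (le_max_right _ _)
      have hle : ∫ x in S, v x * (w x - ρstar) ≤ ρstar := by
        have := (key ρstar hρ01).symm.trans hfix
        linarith
      rw [expand S hSsub'] at hle
      nlinarith
end

section
/- With h(ρ) := r([w⁻¹(ρ),1], v) and ρ* the unique fixed point of h (so h(ρ*) = ρ*), and assuming v(x) ≤ v̄ for all x, the inequality (ρ − ρ*)(h(ρ) − ρ) ≤ −(1/(1+v̄))·(ρ − ρ*)² holds for all ρ ∈ [0,1]. -/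
/-!
Write `F ρ = ∫₀¹ v (w - ρ)⁺`. Since `{x ∈ [0,1] | ρ ≤ w x} = [w⁻¹(ρ), 1]`, one has
`h ρ - ρ = (F ρ - ρ) / (1 + ∫_{[w⁻¹(ρ),1]} v)`, so the fixed point satisfies `F ρ* = ρ*`.
As `F` is antitone, `(ρ - ρ*)(F ρ - ρ) ≤ -(ρ - ρ*)²`, and the denominator lies in `[1, 1 + v̄]`.
-/

open MeasureTheory Set

lemma sub_mul_sub_le_neg_sq_of_antitone {F : ℝ → ℝ} (hF : Antitone F) {y : ℝ} (hy : F y = y)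
    (x : ℝ) : (x - y) * (F x - x) ≤ -(x - y) ^ 2 := by
  have hmono : (x - y) * (F x - F y) ≤ 0 := by
    rcases le_total y x with hxy | hxy
    · exact mul_nonpos_of_nonneg_of_nonpos (sub_nonneg.2 hxy) (sub_nonpos.2 (hF hxy))
    · exact mul_nonpos_of_nonpos_of_nonneg (sub_nonpos.2 hxy) (sub_nonneg.2 (hF hxy))
  rw [hy] at hmono
  linarith [show (x - y) * (F x - x) = (x - y) * (F x - y) - (x - y) ^ 2 by ring]

lemma mul_div_one_add_le_of_mul_le_neg_sq {d g A C : ℝ} (hdg : d * g ≤ -d ^ 2) (hA : 0 ≤ A)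
    (hAC : A ≤ C) : d * (g / (1 + A)) ≤ -(1 / (1 + C)) * d ^ 2 := by
  rw [← mul_div_assoc]
  calc d * g / (1 + A) ≤ -d ^ 2 / (1 + A) := div_le_div_of_nonneg_right hdg (by linarith)
    _ ≤ -d ^ 2 / (1 + C) := by
        rw [neg_div, neg_div, neg_le_neg_iff]
        exact div_le_div_of_nonneg_left (sq_nonneg _) (by linarith) (by linarith)
    _ = -(1 / (1 + C)) * d ^ 2 := by ring

lemma setIntegral_Icc_le_of_le {v : ℝ → ℝ} {a C : ℝ} (ha : 0 ≤ a) (hC : 0 ≤ C)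
    (hv_nonneg : ∀ x ∈ Icc a 1, 0 ≤ v x) (hv_le : ∀ x ∈ Icc a 1, v x ≤ C) :
    ∫ x in Icc a 1, v x ≤ C := by
  have hnorm := norm_setIntegral_le_of_norm_le_const (f := v) (μ := volume) measure_Icc_lt_top
    fun x hx => by rw [Real.norm_of_nonneg (hv_nonneg x hx)]; exact hv_le x hx
  have hvol : volume.real (Icc a 1) ≤ 1 := by
    rw [Real.volume_real_Icc]; exact max_le (by linarith) zero_le_one
  calc ∫ x in Icc a 1, v x ≤ C * volume.real (Icc a 1) := (Real.le_norm_self _).trans hnorm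
    _ ≤ C := mul_le_of_le_one_right hC hvol

noncomputable def surplus (v w : ℝ → ℝ) (ρ : ℝ) : ℝ :=
  ∫ x in Icc (0:ℝ) 1, v x * max (w x - ρ) 0

section Surplus

variable {v w : ℝ → ℝ}

lemma integrableOn_surplus_integrand (hv : IntegrableOn v (Icc 0 1))
    (hw : ContinuousOn w (Icc 0 1)) (ρ : ℝ) :
    IntegrableOn (fun x => v x * max (w x - ρ) 0) (Icc 0 1) :=
  hv.mul_continuousOn ((hw.sub continuousOn_const).sup continuousOn_const) isCompact_Icc

lemma antitone_surplus (hv : IntegrableOn v (Icc 0 1)) (hv_nonneg : ∀ x ∈ Icc (0:ℝ) 1, 0 ≤ v x)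
    (hw : ContinuousOn w (Icc 0 1)) : Antitone (surplus v w) := fun ρ₁ ρ₂ hρ =>
  setIntegral_mono_on (integrableOn_surplus_integrand hv hw ρ₂)
    (integrableOn_surplus_integrand hv hw ρ₁) measurableSet_Icc fun x hx =>
      mul_le_mul_of_nonneg_left (max_le_max (by linarith) le_rfl) (hv_nonneg x hx)

lemma surplus_eq_of_isLeast (hv : IntegrableOn v (Icc 0 1)) (hw : ContinuousOn w (Icc 0 1))
    (hw_mono : MonotoneOn w (Icc 0 1)) {ρ a : ℝ}
    (ha : IsLeast {x | x ∈ Icc (0:ℝ) 1 ∧ ρ ≤ w x} a) :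
    surplus v w ρ = (∫ x in Icc a 1, v x * w x) - ρ * ∫ x in Icc a 1, v x := by
  obtain ⟨⟨⟨ha0, ha1⟩, hρa⟩, ha_least⟩ := ha
  have hsub : Icc a 1 ⊆ Icc (0:ℝ) 1 := Icc_subset_Icc_left ha0
  have hρw : ∀ x ∈ Icc a 1, ρ ≤ w x := fun x hx =>
    hρa.trans (hw_mono ⟨ha0, ha1⟩ (hsub hx) hx.1)
  have hvw : IntegrableOn (fun x => v x * w x) (Icc a 1) :=
    (hv.mono_set hsub).mul_continuousOn (hw.mono hsub) isCompact_Icc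
  calc surplus v w ρ = ∫ x in Icc a 1, v x * max (w x - ρ) 0 := by
        refine setIntegral_eq_of_subset_of_forall_sdiff_eq_zero measurableSet_Icc hsub ?_
        rintro x ⟨hx, hxa⟩
        have hwx : w x < ρ := lt_of_not_ge fun h =>
          hxa ⟨ha_least ⟨hx, h⟩, hx.2⟩
        rw [max_eq_right (by linarith), mul_zero]
    _ = ∫ x in Icc a 1, (v x * w x - v x * ρ) :=
        setIntegral_congr_fun measurableSet_Icc fun x hx => by
          rw [max_eq_left (sub_nonneg.2 (hρw x hx)), mul_sub]
    _ = (∫ x in Icc a 1, v x * w x) - ρ * ∫ x in Icc a 1, v x := by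
        rw [integral_sub hvw ((hv.mono_set hsub).mul_const ρ), integral_mul_const, mul_comm]

lemma div_one_add_sub_eq_of_isLeast (hv : IntegrableOn v (Icc 0 1))
    (hw : ContinuousOn w (Icc 0 1)) (hw_mono : MonotoneOn w (Icc 0 1)) {ρ a : ℝ}
    (ha : IsLeast {x | x ∈ Icc (0:ℝ) 1 ∧ ρ ≤ w x} a) (hA : 1 + ∫ x in Icc a 1, v x ≠ 0) :
    (∫ x in Icc a 1, v x * w x) / (1 + ∫ x in Icc a 1, v x) - ρ
      = (surplus v w ρ - ρ) / (1 + ∫ x in Icc a 1, v x) := by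
  rw [surplus_eq_of_isLeast hv hw hw_mono ha]
  field_simp
  ring

end Surplus

theorem stmt2_general (w v : ℝ → ℝ) (vmin vbar : ℝ)
    (hw_cont : ContinuousOn w (Icc 0 1))
    (hw_mono : StrictMonoOn w (Icc 0 1))
    (hv_int : IntegrableOn v (Icc 0 1))
    (hvmin : 0 < vmin)
    (hv_mem : ∀ x ∈ Icc (0:ℝ) 1, v x ∈ Icc vmin vbar)
    (winv : ℝ → ℝ)
    (hwinv : ∀ ρ ∈ Icc (0:ℝ) 1, IsLeast {x | x ∈ Icc (0:ℝ) 1 ∧ ρ ≤ w x} (winv ρ))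
    (h : ℝ → ℝ)
    (hh : ∀ ρ, h ρ =
      (∫ x in Icc (winv ρ) 1, v x * w x) / (1 + ∫ x in Icc (winv ρ) 1, v x))
    (ρstar : ℝ) (hρstar : ρstar ∈ Icc (0:ℝ) 1) (hfix : h ρstar = ρstar) :
    ∀ ρ ∈ Icc (0:ℝ) 1,
      (ρ - ρstar) * (h ρ - ρ) ≤ -(1 / (1 + vbar)) * (ρ - ρstar)^2 := by
  have hv_nonneg : ∀ x ∈ Icc (0:ℝ) 1, 0 ≤ v x := fun x hx => hvmin.le.trans (hv_mem x hx).1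
  have hvbar : 0 ≤ vbar :=
    (hv_nonneg 0 ⟨le_rfl, zero_le_one⟩).trans (hv_mem 0 ⟨le_rfl, zero_le_one⟩).2
  have hmass : ∀ ρ ∈ Icc (0:ℝ) 1,
      0 ≤ ∫ x in Icc (winv ρ) 1, v x ∧ ∫ x in Icc (winv ρ) 1, v x ≤ vbar := fun ρ hρ => by
    have hsub : Icc (winv ρ) 1 ⊆ Icc (0:ℝ) 1 := Icc_subset_Icc_left (hwinv ρ hρ).1.1.1
    exact ⟨setIntegral_nonneg measurableSet_Icc fun x hx => hv_nonneg x (hsub hx),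
      setIntegral_Icc_le_of_le (hwinv ρ hρ).1.1.1 hvbar (fun x hx => hv_nonneg x (hsub hx))
        fun x hx => (hv_mem x (hsub hx)).2⟩
  have hgap : ∀ ρ ∈ Icc (0:ℝ) 1,
      h ρ - ρ = (surplus v w ρ - ρ) / (1 + ∫ x in Icc (winv ρ) 1, v x) := fun ρ hρ => by
    rw [hh]
    exact div_one_add_sub_eq_of_isLeast hv_int hw_cont hw_mono.monotoneOn (hwinv ρ hρ)
      (by linarith [(hmass ρ hρ).1])
  have hstar : surplus v w ρstar = ρstar := by
    have h0 := hgap ρstar hρstar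
    rw [hfix, sub_self, eq_comm, div_eq_zero_iff] at h0
    exact sub_eq_zero.1 (h0.resolve_right (by linarith [(hmass ρstar hρstar).1]))
  intro ρ hρ
  have hkey :=
    sub_mul_sub_le_neg_sq_of_antitone (antitone_surplus hv_int hv_nonneg hw_cont) hstar ρ
  obtain ⟨hA0, hAle⟩ := hmass ρ hρ
  rw [hgap ρ hρ]
  exact mul_div_one_add_le_of_mul_le_neg_sq hkey hA0 hAle

theorem stmt2 (w v : ℝ → ℝ) (vmin vbar : ℝ)
    (hw_cont : ContinuousOn w (Icc 0 1))
    (hw_mono : StrictMonoOn w (Icc 0 1))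
    (hw_range : ∀ x ∈ Icc (0:ℝ) 1, w x ∈ Icc (0:ℝ) 1)
    (hv_int : IntegrableOn v (Icc 0 1))
    (hvmin : 0 < vmin)
    (hv_mem : ∀ x ∈ Icc (0:ℝ) 1, v x ∈ Icc vmin vbar)
    (winv : ℝ → ℝ)
    (hwinv : ∀ ρ ∈ Icc (0:ℝ) 1, IsLeast {x | x ∈ Icc (0:ℝ) 1 ∧ ρ ≤ w x} (winv ρ))
    (h : ℝ → ℝ)
    (hh : ∀ ρ, h ρ =
      (∫ x in Icc (winv ρ) 1, v x * w x) / (1 + ∫ x in Icc (winv ρ) 1, v x))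
    (ρstar : ℝ) (hρstar : ρstar ∈ Icc (0:ℝ) 1) (hfix : h ρstar = ρstar)
    (huniq : ∀ ρ ∈ Icc (0:ℝ) 1, h ρ = ρ → ρ = ρstar) :
    ∀ ρ ∈ Icc (0:ℝ) 1,
      (ρ - ρstar) * (h ρ - ρ) ≤ -(1 / (1 + vbar)) * (ρ - ρstar)^2 :=
  stmt2_general w v vmin vbar hw_cont hw_mono hv_int hvmin hv_mem winv hwinv h hh ρstar hρstar hfix
end

section
/- Suppose v is continuously differentiable on (0,1) with bounded derivative, w is continuously differentiable with k_w := inf_{x∈(0,1)} w'(x) > 0, and h(ρ) := r([w⁻¹(ρ),1], v) with fixed point ρ* = h(ρ*). Then there exists a constant C > 0 such that h(ρ*) − h(ρ) ≤ C (ρ − ρ*)² for all ρ ∈ [0,1]. -/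
/-!
Write `a = w⁻¹(ρ)`, `b = w⁻¹(ρ*)` and `g = (w - ρ*) v`. Since `r(S) = ρ*` exactly when
`∫_S g = ρ*`, the fixed-point equation gives `∫_{[b,1]} g = ρ*`, hence
`ρ* - h(ρ) = (∫_b^a g) / (1 + ∫_{[a,1]} v)`. Between `a` and `b` the value of `w` lies between
`ρ` and `ρ*`, so `|g| ≤ B |ρ - ρ*|` with `B` a bound for `v` (which exists as `v'` is bounded),
while `w' ≥ k_w` gives `|a - b| ≤ |ρ - ρ*| / k_w`. Together: `h(ρ*) - h(ρ) ≤ (B / k_w) (ρ - ρ*)²`.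
-/

open MeasureTheory Set

theorem exists_abs_le_of_abs_deriv_le {f f' : ℝ → ℝ} {a b M : ℝ} (hab : a < b)
    (hf : ∀ x ∈ Ioo a b, HasDerivAt f (f' x) x) (hM : ∀ x ∈ Ioo a b, |f' x| ≤ M) :
    ∃ B ≥ 0, ∀ x ∈ Ioo a b, |f x| ≤ B := by
  have hc : (a + b) / 2 ∈ Ioo a b := ⟨by linarith, by linarith⟩
  have hM0 : 0 ≤ M := (abs_nonneg _).trans (hM _ hc)
  refine ⟨|f ((a + b) / 2)| + M * (b - a), by have := hab.le; positivity, fun x hx => ?_⟩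
  have hlip : |f x - f ((a + b) / 2)| ≤ M * |x - (a + b) / 2| :=
    (convex_Ioo a b).norm_image_sub_le_of_norm_hasDerivWithin_le
      (fun y hy => (hf y hy).hasDerivWithinAt) hM hc hx
  have hdist : |x - (a + b) / 2| ≤ b - a :=
    abs_sub_le_iff.2 ⟨by linarith [hx.2], by linarith [hx.1]⟩
  linarith [abs_sub_abs_le_abs_sub (f x) (f ((a + b) / 2)), mul_le_mul_of_nonneg_left hdist hM0]

theorem mul_sub_le_sub_of_le_deriv_Ioo {f f' : ℝ → ℝ} {l u k : ℝ}
    (hf : ContinuousOn f (Icc l u)) (hf' : ∀ x ∈ Ioo l u, HasDerivAt f (f' x) x)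
    (hk : ∀ x ∈ Ioo l u, k ≤ f' x) :
    ∀ x ∈ Icc l u, ∀ y ∈ Icc l u, x ≤ y → k * (y - x) ≤ f y - f x := by
  refine (convex_Icc l u).mul_sub_le_image_sub_of_le_deriv hf (fun x hx => ?_) fun x hx => ?_
  · rw [interior_Icc] at hx
    exact (hf' x hx).differentiableAt.differentiableWithinAt
  · rw [interior_Icc] at hx
    rw [(hf' x hx).deriv]
    exact hk x hx

theorem div_le_abs_of_one_le {α : Type*} [Field α] [LinearOrder α] [IsStrictOrderedRing α]
    {x d : α} (hd : 1 ≤ d) : x / d ≤ |x| :=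
  calc x / d ≤ |x| / d := div_le_div_of_nonneg_right (le_abs_self x) (zero_le_one.trans hd)
    _ ≤ |x| := div_le_self (abs_nonneg x) hd

theorem sub_div_one_add_integral {α : Type*} [MeasurableSpace α] {μ : Measure α} {v w : α → ℝ}
    (hv : Integrable v μ) (hvw : Integrable (fun x => v x * w x) μ)
    (hD : 1 + ∫ x, v x ∂μ ≠ 0) (r : ℝ) :
    r - (∫ x, v x * w x ∂μ) / (1 + ∫ x, v x ∂μ) =
      (r - ∫ x, (w x - r) * v x ∂μ) / (1 + ∫ x, v x ∂μ) := by
  have hg : ∫ x, (w x - r) * v x ∂μ = (∫ x, v x * w x ∂μ) - r * ∫ x, v x ∂μ := by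
    rw [← integral_const_mul, ← integral_sub hvw (hv.const_mul r)]
    congr 1 with x
    ring
  rw [hg]
  field_simp
  ring

theorem setIntegral_Icc_sub_setIntegral_Icc {g : ℝ → ℝ} {l u a b : ℝ}
    (hg : IntegrableOn g (Icc l u)) (ha : a ∈ Icc l u) (hb : b ∈ Icc l u) :
    (∫ x in Icc b u, g x) - ∫ x in Icc a u, g x = ∫ x in b..a, g x := by
  have hu : u ∈ Icc l u := ⟨ha.1.trans ha.2, le_rfl⟩
  rw [integral_Icc_eq_integral_Ioc, integral_Icc_eq_integral_Ioc,
    ← intervalIntegral.integral_of_le hb.2, ← intervalIntegral.integral_of_le ha.2,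
    sub_eq_iff_eq_add, intervalIntegral.integral_add_adjacent_intervals
      (hg.mono_set (uIcc_subset_Icc hb ha)).intervalIntegrable
      (hg.mono_set (uIcc_subset_Icc ha hu)).intervalIntegrable]

theorem abs_intervalIntegral_le_of_abs_le_on_Ioo {g : ℝ → ℝ} {a b C : ℝ}
    (h : ∀ x ∈ Ioo (min a b) (max a b), |g x| ≤ C) : |∫ x in a..b, g x| ≤ C * |b - a| := by
  rw [← Real.norm_eq_abs]
  refine intervalIntegral.norm_integral_le_of_norm_le_const_ae <|
    (Measure.ae_ne volume (max a b)).mono fun x hx hxI => ?_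
  exact h x ⟨hxI.1, hxI.2.lt_of_ne hx⟩

/-- The paper's `r([t, 1], v)`. -/
noncomputable def revenue (v w : ℝ → ℝ) (t : ℝ) : ℝ :=
  (∫ x in Icc t 1, v x * w x) / (1 + ∫ x in Icc t 1, v x)

theorem sub_revenue_le_abs_intervalIntegral {v w : ℝ → ℝ} {a b r : ℝ}
    (hv : IntegrableOn v (Icc 0 1)) (hv0 : ∀ x ∈ Icc (0:ℝ) 1, 0 ≤ v x)
    (hw : ContinuousOn w (Icc 0 1)) (ha : a ∈ Icc (0:ℝ) 1) (hb : b ∈ Icc (0:ℝ) 1)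
    (hfix : revenue v w b = r) :
    r - revenue v w a ≤ |∫ x in b..a, (w x - r) * v x| := by
  have hD : ∀ t ∈ Icc (0:ℝ) 1, 1 ≤ 1 + ∫ x in Icc t 1, v x := fun t ht =>
    le_add_of_nonneg_right <| setIntegral_nonneg measurableSet_Icc fun x hx =>
      hv0 x ⟨ht.1.trans hx.1, hx.2⟩
  have hgap : ∀ t ∈ Icc (0:ℝ) 1, r - revenue v w t =
      (r - ∫ x in Icc t 1, (w x - r) * v x) / (1 + ∫ x in Icc t 1, v x) := fun t ht =>
    have hsub : Icc t 1 ⊆ Icc 0 1 := Icc_subset_Icc_left ht.1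
    sub_div_one_add_integral (hv.mono_set hsub)
      ((hv.mul_continuousOn hw isCompact_Icc).mono_set hsub)
      (zero_lt_one.trans_le (hD t ht)).ne' r
  have hstar : ∫ x in Icc b 1, (w x - r) * v x = r := by
    have h0 := hgap b hb
    rw [hfix, sub_self, eq_comm, div_eq_zero_iff] at h0
    exact (sub_eq_zero.1 (h0.resolve_right (zero_lt_one.trans_le (hD b hb)).ne')).symm
  have hg : IntegrableOn (fun x => (w x - r) * v x) (Icc 0 1) :=
    hv.continuousOn_mul (hw.sub continuousOn_const) isCompact_Icc
  rw [hgap a ha, ← setIntegral_Icc_sub_setIntegral_Icc hg ha hb, hstar]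
  exact div_le_abs_of_one_le (hD a ha)

section UpperLevelSet

variable {w : ℝ → ℝ} {l u ρ σ a b : ℝ}

theorem lt_of_lt_isLeast (ha : IsLeast {x | x ∈ Icc l u ∧ ρ ≤ w x} a) {x : ℝ}
    (hx : x ∈ Icc l u) (hxa : x < a) : w x < ρ :=
  lt_of_not_ge fun hρx => (ha.2 ⟨hx, hρx⟩).not_gt hxa

theorem apply_eq_of_isLeast (hw : ContinuousOn w (Icc l u))
    (ha : IsLeast {x | x ∈ Icc l u ∧ ρ ≤ w x} a) (hla : l < a) : w a = ρ := by
  have hρ : ρ ∈ Icc (w l) (w a) :=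
    ⟨(lt_of_lt_isLeast ha ⟨le_rfl, hla.le.trans ha.1.1.2⟩ hla).le, ha.1.2⟩
  obtain ⟨c, hc, hwc⟩ :=
    intermediate_value_Icc hla.le (hw.mono (Icc_subset_Icc_right ha.1.1.2)) hρ
  have hac : a ≤ c := ha.2 ⟨⟨hc.1, hc.2.trans ha.1.1.2⟩, hwc.ge⟩
  rwa [le_antisymm hc.2 hac] at hwc

theorem mem_Icc_of_mem_Ioo_of_isLeast (hw : MonotoneOn w (Icc l u))
    (ha : IsLeast {x | x ∈ Icc l u ∧ ρ ≤ w x} a) (hb : IsLeast {x | x ∈ Icc l u ∧ σ ≤ w x} b)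
    {x : ℝ} (hx : x ∈ Ioo a b) : w x ∈ Icc ρ σ := by
  have hxI : x ∈ Icc l u := ⟨ha.1.1.1.trans hx.1.le, hx.2.le.trans hb.1.1.2⟩
  exact ⟨ha.1.2.trans (hw ha.1.1 hxI hx.1.le), (lt_of_lt_isLeast hb hxI hx.2).le⟩

theorem abs_sub_le_of_mem_Ioo_of_isLeast (hw : MonotoneOn w (Icc l u))
    (ha : IsLeast {x | x ∈ Icc l u ∧ ρ ≤ w x} a) (hb : IsLeast {x | x ∈ Icc l u ∧ σ ≤ w x} b)
    {x : ℝ} (hx : x ∈ Ioo (min a b) (max a b)) : |w x - σ| ≤ |ρ - σ| := by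
  have hρσ := le_abs_self (ρ - σ)
  have hσρ := neg_abs_le (ρ - σ)
  rcases le_total a b with hab | hba
  · rw [min_eq_left hab, max_eq_right hab] at hx
    have hwx := mem_Icc_of_mem_Ioo_of_isLeast hw ha hb hx
    exact abs_le.2 ⟨by linarith [hwx.1], by linarith [hwx.2]⟩
  · rw [min_eq_right hba, max_eq_left hba] at hx
    have hwx := mem_Icc_of_mem_Ioo_of_isLeast hw hb ha hx
    exact abs_le.2 ⟨by linarith [hwx.1], by linarith [hwx.2]⟩

theorem mul_abs_sub_le_of_isLeast {k : ℝ} (hw : ContinuousOn w (Icc l u))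
    (hk : ∀ x ∈ Icc l u, ∀ y ∈ Icc l u, x ≤ y → k * (y - x) ≤ w y - w x)
    (ha : IsLeast {x | x ∈ Icc l u ∧ ρ ≤ w x} a) (hb : IsLeast {x | x ∈ Icc l u ∧ σ ≤ w x} b) :
    k * |a - b| ≤ |ρ - σ| := by
  wlog hab : a < b generalizing a b ρ σ
  · rcases (not_lt.1 hab).eq_or_lt with rfl | hba
    · simp
    · rw [abs_sub_comm, abs_sub_comm ρ]
      exact this hb ha hba
  have hwb : w b = σ := apply_eq_of_isLeast hw hb (ha.1.1.1.trans_lt hab)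
  have hslope := hk a ha.1.1 b hb.1.1 hab.le
  rw [abs_sub_comm, abs_of_pos (sub_pos.2 hab), abs_sub_comm]
  linarith [ha.1.2, le_abs_self (σ - ρ)]

theorem abs_intervalIntegral_sub_mul_le_of_isLeast {v : ℝ → ℝ} {B : ℝ}
    (hw : MonotoneOn w (Icc l u)) (hv : ∀ x ∈ Ioo l u, |v x| ≤ B)
    (ha : IsLeast {x | x ∈ Icc l u ∧ ρ ≤ w x} a) (hb : IsLeast {x | x ∈ Icc l u ∧ σ ≤ w x} b) :
    |∫ x in b..a, (w x - σ) * v x| ≤ |ρ - σ| * B * |a - b| :=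
  abs_intervalIntegral_le_of_abs_le_on_Ioo fun x hx => by
    rw [min_comm, max_comm] at hx
    have hxI : x ∈ Ioo l u :=
      ⟨(le_min ha.1.1.1 hb.1.1.1).trans_lt hx.1, hx.2.trans_le (max_le ha.1.1.2 hb.1.1.2)⟩
    rw [abs_mul]
    exact mul_le_mul (abs_sub_le_of_mem_Ioo_of_isLeast hw ha hb hx) (hv x hxI) (abs_nonneg _)
      (abs_nonneg _)

end UpperLevelSet

theorem stmt3_general (w v w' v' : ℝ → ℝ) (kw : ℝ)
    (hw_cont : ContinuousOn w (Icc 0 1))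
    (hw_mono : StrictMonoOn w (Icc 0 1))
    (hw_deriv : ∀ x ∈ Ioo (0:ℝ) 1, HasDerivAt w (w' x) x)
    (hkw : 0 < kw) (hkw_le : ∀ x ∈ Ioo (0:ℝ) 1, kw ≤ w' x)
    (hv_int : IntegrableOn v (Icc 0 1))
    (hv_pos : ∀ x ∈ Icc (0:ℝ) 1, 0 < v x)
    (hv_deriv : ∀ x ∈ Ioo (0:ℝ) 1, HasDerivAt v (v' x) x)
    (hv'_bdd : ∃ M : ℝ, ∀ x ∈ Ioo (0:ℝ) 1, |v' x| ≤ M)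
    (winv : ℝ → ℝ)
    (hwinv : ∀ ρ ∈ Icc (0:ℝ) 1, IsLeast {x | x ∈ Icc (0:ℝ) 1 ∧ ρ ≤ w x} (winv ρ))
    (h : ℝ → ℝ)
    (hh : ∀ ρ, h ρ =
      (∫ x in Icc (winv ρ) 1, v x * w x) / (1 + ∫ x in Icc (winv ρ) 1, v x))
    (ρstar : ℝ) (hρstar : ρstar ∈ Icc (0:ℝ) 1) (hfix : h ρstar = ρstar) :
    ∃ C > 0, ∀ ρ ∈ Icc (0:ℝ) 1, h ρstar - h ρ ≤ C * (ρ - ρstar)^2 := by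
  obtain ⟨M, hM⟩ := hv'_bdd
  obtain ⟨B, hB0, hB⟩ := exists_abs_le_of_abs_deriv_le zero_lt_one hv_deriv hM
  refine ⟨B / kw + 1, by positivity, fun ρ hρ => ?_⟩
  have hwinv_sub : kw * |winv ρ - winv ρstar| ≤ |ρ - ρstar| :=
    mul_abs_sub_le_of_isLeast hw_cont (mul_sub_le_sub_of_le_deriv_Ioo hw_cont hw_deriv hkw_le)
      (hwinv ρ hρ) (hwinv ρstar hρstar)
  calc h ρstar - h ρ ≤ |∫ x in winv ρstar..winv ρ, (w x - ρstar) * v x| := by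
        rw [hfix, hh ρ]
        exact sub_revenue_le_abs_intervalIntegral hv_int (fun x hx => (hv_pos x hx).le) hw_cont
          (hwinv ρ hρ).1.1 (hwinv ρstar hρstar).1.1 ((hh ρstar).symm.trans hfix)
    _ ≤ |ρ - ρstar| * B * |winv ρ - winv ρstar| :=
        abs_intervalIntegral_sub_mul_le_of_isLeast hw_mono.monotoneOn hB (hwinv ρ hρ)
          (hwinv ρstar hρstar)
    _ ≤ |ρ - ρstar| * B * (|ρ - ρstar| / kw) := by
        gcongr
        rwa [le_div_iff₀ hkw, mul_comm]
    _ = B / kw * (ρ - ρstar) ^ 2 := by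
        rw [← sq_abs (ρ - ρstar)]
        field_simp
    _ ≤ (B / kw + 1) * (ρ - ρstar) ^ 2 := by gcongr; linarith

theorem stmt3 (w v w' v' : ℝ → ℝ) (kw : ℝ)
    (hw_cont : ContinuousOn w (Icc 0 1))
    (hw_mono : StrictMonoOn w (Icc 0 1))
    (hw_range : ∀ x ∈ Icc (0:ℝ) 1, w x ∈ Icc (0:ℝ) 1)
    (hw_deriv : ∀ x ∈ Ioo (0:ℝ) 1, HasDerivAt w (w' x) x)
    (hw'_cont : ContinuousOn w' (Ioo 0 1))
    (hkw : 0 < kw) (hkw_le : ∀ x ∈ Ioo (0:ℝ) 1, kw ≤ w' x)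
    (hv_int : IntegrableOn v (Icc 0 1))
    (hv_pos : ∀ x ∈ Icc (0:ℝ) 1, 0 < v x)
    (hv_deriv : ∀ x ∈ Ioo (0:ℝ) 1, HasDerivAt v (v' x) x)
    (hv'_cont : ContinuousOn v' (Ioo 0 1))
    (hv'_bdd : ∃ M : ℝ, ∀ x ∈ Ioo (0:ℝ) 1, |v' x| ≤ M)
    (winv : ℝ → ℝ)
    (hwinv : ∀ ρ ∈ Icc (0:ℝ) 1, IsLeast {x | x ∈ Icc (0:ℝ) 1 ∧ ρ ≤ w x} (winv ρ))
    (h : ℝ → ℝ)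
    (hh : ∀ ρ, h ρ =
      (∫ x in Icc (winv ρ) 1, v x * w x) / (1 + ∫ x in Icc (winv ρ) 1, v x))
    (ρstar : ℝ) (hρstar : ρstar ∈ Icc (0:ℝ) 1) (hfix : h ρstar = ρstar) :
    ∃ C > 0, ∀ ρ ∈ Icc (0:ℝ) 1, h ρstar - h ρ ≤ C * (ρ - ρstar)^2 :=
  stmt3_general w v w' v' kw hw_cont hw_mono hw_deriv hkw hkw_le hv_int hv_pos hv_deriv hv'_bdd winv
    hwinv h hh ρstar hρstar hfix
end

section
/- Fix θ ∈ [θ_min, θ_max] with 0 < θ_min < θ_max, a constant preference function v_θ(x) = θ, and w : [0,1] → [0,1] continuously differentiable, strictly increasing with k_w = inf w' > 0 and θ_min > w(0)/∫₀¹(w(x)−w(0))dx. Let y(θ) ∈ (0,1) be the unique maximizer of g(y,θ) := r([y,1], v_θ). Then for every Borel set S ⊆ [0,1], r([y(θ),1], v_θ) − r(S, v_θ) ≥ κ₀ (vol(S) − (1 − y(θ)))², where κ₀ = (θ_min k_w / 2)/(1 + θ_max). -/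
open MeasureTheory Set Filter Topology
open scoped ENNReal

/-!
At the optimal threshold `y` the first-order condition says that the optimal revenue equals
`w y`. Among sets of a given volume `1 - z`, the tail interval `[z, 1]` maximises `∫ w`
(bathtub principle, `w` being increasing), so it suffices to compare `[y, 1]` with `[z, 1]`.
Since `w' ≥ k_w`, the integral `∫_y^z w` exceeds its linearisation `(z - y) w y` by at least
`k_w (z - y)² / 2`, and with the first-order condition this turns into a quadratic revenue gap.
-/

section Bathtub

variable {α : Type*} [MeasurableSpace α] {μ : Measure α} {f : α → ℝ} {s t : Set α}

theorem setIntegral_le_setIntegral_of_measure_eq (c : ℝ) (hs : MeasurableSet s)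
    (ht : MeasurableSet t) (hμ : μ s = μ t) (hμs : μ s ≠ ∞) (hfs : IntegrableOn f s μ)
    (hft : IntegrableOn f t μ) (hle : ∀ x ∈ s \ t, f x ≤ c) (hge : ∀ x ∈ t \ s, c ≤ f x) :
    ∫ x in s, f x ∂μ ≤ ∫ x in t, f x ∂μ := by
  have hμt : μ t ≠ ∞ := hμ ▸ hμs
  have hsdiff : μ (s \ t) = μ (t \ s) :=
    measure_sdiff_symm hs.nullMeasurableSet ht.nullMeasurableSet hμ
      (measure_ne_top_of_subset inter_subset_left hμs)
  have hdiff : ∫ x in s \ t, f x ∂μ ≤ ∫ x in t \ s, f x ∂μ :=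
    calc ∫ x in s \ t, f x ∂μ
        ≤ ∫ _ in s \ t, c ∂μ :=
          setIntegral_mono_on (hfs.mono_set sdiff_subset)
            (integrableOn_const (measure_ne_top_of_subset sdiff_subset hμs)) (hs.diff ht) hle
      _ = ∫ _ in t \ s, c ∂μ := by simp only [setIntegral_const, measureReal_def, hsdiff]
      _ ≤ ∫ x in t \ s, f x ∂μ :=
          setIntegral_mono_on (integrableOn_const (measure_ne_top_of_subset sdiff_subset hμt))
            (hft.mono_set sdiff_subset) (ht.diff hs) hge
  rw [← integral_inter_add_sdiff ht hfs, ← integral_inter_add_sdiff hs hft, inter_comm]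
  gcongr

end Bathtub

theorem setIntegral_le_setIntegral_Icc_of_monotoneOn {f : ℝ → ℝ} {a b z : ℝ} {s : Set ℝ}
    (hf : MonotoneOn f (Icc a b)) (hfi : IntegrableOn f (Icc a b)) (hs : MeasurableSet s)
    (hsab : s ⊆ Icc a b) (hz : z ∈ Icc a b) (hvol : volume s = volume (Icc z b)) :
    ∫ x in s, f x ≤ ∫ x in Icc z b, f x := by
  have hzb : Icc z b ⊆ Icc a b := Icc_subset_Icc_left hz.1
  refine setIntegral_le_setIntegral_of_measure_eq (f z) hs measurableSet_Icc hvol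
    (measure_ne_top_of_subset hsab measure_Icc_lt_top.ne) (hfi.mono_set hsab)
    (hfi.mono_set hzb) ?_ ?_
  · rintro x ⟨hxs, hxz⟩
    have hx := hsab hxs
    exact hf hx hz (not_lt.1 fun h => hxz ⟨h.le, hx.2⟩)
  · rintro x ⟨hx, -⟩
    exact hf hz (hzb hx) hx.1

theorem setIntegral_Icc_eq_intervalIntegral {f : ℝ → ℝ} {a b : ℝ} (hab : a ≤ b) :
    ∫ x in Icc a b, f x = ∫ x in a..b, f x := by
  rw [intervalIntegral.integral_of_le hab, integral_Icc_eq_integral_Ioc]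

theorem mul_sub_le_sub_of_le_hasDerivAt {f f' : ℝ → ℝ} {a b k : ℝ}
    (hf : ContinuousOn f (Icc a b)) (hf' : ∀ x ∈ Ioo a b, HasDerivAt f (f' x) x)
    (hk : ∀ x ∈ Ioo a b, k ≤ f' x) :
    ∀ x ∈ Icc a b, ∀ y ∈ Icc a b, x ≤ y → k * (y - x) ≤ f y - f x := by
  refine (convex_Icc a b).mul_sub_le_image_sub_of_le_deriv hf ?_ ?_ <;> rw [interior_Icc]
  · exact fun x hx => (hf' x hx).differentiableAt.differentiableWithinAt
  · exact fun x hx => (hf' x hx).deriv ▸ hk x hx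

theorem sub_mul_add_sq_le_intervalIntegral {f : ℝ → ℝ} {a b k y z : ℝ}
    (hf : ContinuousOn f (Icc a b))
    (hgrow : ∀ s ∈ Icc a b, ∀ t ∈ Icc a b, s ≤ t → k * (t - s) ≤ f t - f s)
    (hy : y ∈ Icc a b) (hz : z ∈ Icc a b) :
    (z - y) * f y + k * (z - y) ^ 2 / 2 ≤ ∫ t in y..z, f t := by
  have hfi : IntervalIntegrable f volume y z :=
    (hf.mono (uIcc_subset_Icc hy hz)).intervalIntegrable
  have hgi : IntervalIntegrable (fun t => f y + k * (t - y)) volume y z :=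
    (by fun_prop : Continuous fun t => f y + k * (t - y)).intervalIntegrable y z
  have hlin : ∫ t in y..z, (f y + k * (t - y)) = (z - y) * f y + k * (z - y) ^ 2 / 2 := by
    simp only [intervalIntegral.integral_add intervalIntegrable_const
      ((by fun_prop : Continuous fun t => k * (t - y)).intervalIntegrable y z),
      intervalIntegral.integral_const_mul, intervalIntegral.integral_comp_sub_right (fun t => t),
      integral_id, intervalIntegral.integral_const, smul_eq_mul]
    ring
  rw [← hlin]
  rcases le_total y z with hyz | hzy
  · refine intervalIntegral.integral_mono_on hyz hgi hfi fun t ht => ?_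
    have := hgrow y hy t ⟨hy.1.trans ht.1, ht.2.trans hz.2⟩ ht.1
    linarith
  · rw [intervalIntegral.integral_symm, intervalIntegral.integral_symm z y, neg_le_neg_iff]
    refine intervalIntegral.integral_mono_on hzy hfi.symm hgi.symm fun t ht => ?_
    have := hgrow t ⟨hz.1.trans ht.1, ht.2.trans hy.2⟩ y hy ht.2
    linarith

theorem IsLocalMax.mul_eq_mul_of_hasDerivAt_div {N D : ℝ → ℝ} {y n d : ℝ}
    (hmax : IsLocalMax (fun u => N u / D u) y) (hN : HasDerivAt N n y) (hD : HasDerivAt D d y)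
    (hDy : D y ≠ 0) : n * D y = N y * d := by
  have h := hmax.hasDerivAt_eq_zero (hN.div hD hDy)
  rw [div_eq_zero_iff, sub_eq_zero] at h
  exact h.resolve_right (pow_ne_zero 2 hDy)

section TailRevenue

variable {w : ℝ → ℝ} {θ y : ℝ}

theorem tail_revenue_first_order (hθ : 0 < θ) (hw : ContinuousOn w (Icc 0 1))
    (hy : y ∈ Ioo 0 1)
    (hmax : ∀ z ∈ Icc (0:ℝ) 1, (θ * ∫ x in Icc z 1, w x) / (1 + θ * (1 - z)) ≤
      (θ * ∫ x in Icc y 1, w x) / (1 + θ * (1 - y))) :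
    w y * (1 + θ * (1 - y)) = θ * ∫ t in y..1, w t := by
  have hN : HasDerivAt (fun u => θ * ∫ t in u..1, w t) (θ * -w y) y :=
    (intervalIntegral.integral_hasDerivAt_left
      (hw.mono (uIcc_subset_Icc (Ioo_subset_Icc_self hy) ⟨zero_le_one, le_rfl⟩)).intervalIntegrable
      ((hw.mono Ioo_subset_Icc_self).stronglyMeasurableAtFilter isOpen_Ioo y hy)
      (hw.continuousAt (Icc_mem_nhds hy.1 hy.2))).const_mul θ
  have hD : HasDerivAt (fun u : ℝ => 1 + θ * (1 - u)) (θ * -1) y :=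
    (((hasDerivAt_id y).const_sub 1).const_mul θ).const_add 1
  have hlocal : IsLocalMax (fun u => (θ * ∫ t in u..1, w t) / (1 + θ * (1 - u))) y := by
    filter_upwards [Icc_mem_nhds hy.1 hy.2] with u hu
    simpa only [setIntegral_Icc_eq_intervalIntegral hu.2,
      setIntegral_Icc_eq_intervalIntegral hy.2.le] using hmax u hu
  have h := hlocal.mul_eq_mul_of_hasDerivAt_div hN hD
    (by nlinarith [hy.2] : 0 < 1 + θ * (1 - y)).ne'
  have hθ' : -θ ≠ 0 := neg_ne_zero.2 hθ.ne'
  apply mul_left_cancel₀ hθ'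
  linear_combination h

theorem tail_revenue_sub_ge {k z : ℝ} (hθ : 0 < θ) (hw : ContinuousOn w (Icc 0 1))
    (hgrow : ∀ s ∈ Icc (0:ℝ) 1, ∀ t ∈ Icc (0:ℝ) 1, s ≤ t → k * (t - s) ≤ w t - w s)
    (hy : y ∈ Icc (0:ℝ) 1) (hz : z ∈ Icc (0:ℝ) 1)
    (hfoc : w y * (1 + θ * (1 - y)) = θ * ∫ t in y..1, w t) :
    θ * k * (z - y) ^ 2 / 2 / (1 + θ * (1 - z)) ≤
      (θ * ∫ t in y..1, w t) / (1 + θ * (1 - y)) - (θ * ∫ t in z..1, w t) / (1 + θ * (1 - z)) := by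
  have hDy : 0 < 1 + θ * (1 - y) := by nlinarith [hy.2]
  have hDz : 0 < 1 + θ * (1 - z) := by nlinarith [hz.2]
  have hsplit : ∫ t in z..1, w t = -(∫ t in y..z, w t) + ∫ t in y..1, w t := by
    rw [← intervalIntegral.integral_symm, intervalIntegral.integral_add_adjacent_intervals
      ((hw.mono (uIcc_subset_Icc hz hy)).intervalIntegrable)
      ((hw.mono (uIcc_subset_Icc hy ⟨zero_le_one, le_rfl⟩)).intervalIntegrable)]
  have htangent := mul_le_mul_of_nonneg_left
    (sub_mul_add_sq_le_intervalIntegral hw hgrow hy hz) hθ.le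
  rw [← hfoc, mul_div_cancel_right₀ _ hDy.ne', le_sub_iff_add_le, ← add_div, div_le_iff₀ hDz,
    hsplit]
  linear_combination htangent - hfoc

end TailRevenue

theorem stmt6_general (w w' : ℝ → ℝ) (θmin θmax θ kw : ℝ)
    (hθmin_pos : 0 < θmin) (hθ : θ ∈ Icc θmin θmax)
    (hw_cont : ContinuousOn w (Icc 0 1))
    (hw_mono : StrictMonoOn w (Icc 0 1))
    (hw_deriv : ∀ x ∈ Ioo (0:ℝ) 1, HasDerivAt w (w' x) x)
    (hkw : 0 < kw) (hkw_le : ∀ x ∈ Ioo (0:ℝ) 1, kw ≤ w' x)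
    (y : ℝ) (hy : y ∈ Ioo (0:ℝ) 1)
    (hy_max : ∀ z ∈ Icc (0:ℝ) 1,
      (θ * ∫ x in Icc z 1, w x) / (1 + θ * (1 - z)) ≤
        (θ * ∫ x in Icc y 1, w x) / (1 + θ * (1 - y))) :
    ∀ S : Set ℝ, MeasurableSet S → S ⊆ Icc 0 1 →
      (θmin * kw / 2) / (1 + θmax) * ((volume S).toReal - (1 - y)) ^ 2 ≤
        (θ * ∫ x in Icc y 1, w x) / (1 + θ * (1 - y)) -
          (θ * ∫ x in S, w x) / (1 + θ * (volume S).toReal) := by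
  intro S hS hS01
  have hθpos : 0 < θ := hθmin_pos.trans_le hθ.1
  have hSfin : volume S ≠ ∞ := measure_ne_top_of_subset hS01 measure_Icc_lt_top.ne
  set m := (volume S).toReal
  have hm1 : m ≤ 1 := by
    simpa using ENNReal.toReal_mono measure_Icc_lt_top.ne (measure_mono (μ := volume) hS01)
  have hz : 1 - m ∈ Icc (0:ℝ) 1 :=
    ⟨by linarith, by linarith [ENNReal.toReal_nonneg (a := volume S)]⟩
  have hvol : volume S = volume (Icc (1 - m) 1) := by
    rw [Real.volume_Icc, sub_sub_cancel, ENNReal.ofReal_toReal hSfin]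
  have hS_le := setIntegral_le_setIntegral_Icc_of_monotoneOn hw_mono.monotoneOn
    hw_cont.integrableOn_Icc hS hS01 hz hvol
  have hgap := tail_revenue_sub_ge hθpos hw_cont
    (mul_sub_le_sub_of_le_hasDerivAt hw_cont hw_deriv hkw_le) (Ioo_subset_Icc_self hy) hz
    (tail_revenue_first_order hθpos hw_cont hy hy_max)
  rw [sub_sub_cancel] at hgap
  rw [setIntegral_Icc_eq_intervalIntegral hz.2] at hS_le
  rw [setIntegral_Icc_eq_intervalIntegral hy.2.le]
  calc (θmin * kw / 2) / (1 + θmax) * (m - (1 - y)) ^ 2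
      = θmin * kw * (1 - m - y) ^ 2 / 2 / (1 + θmax) := by ring
    _ ≤ θ * kw * (1 - m - y) ^ 2 / 2 / (1 + θ * m) := by
        gcongr
        · exact hθ.1
        · nlinarith [hθ.2, hz.2]
    _ ≤ _ := hgap
    _ ≤ _ := by gcongr

theorem stmt6 (w w' : ℝ → ℝ) (θmin θmax θ kw : ℝ)
    (hθmin_pos : 0 < θmin) (hθlt : θmin < θmax) (hθ : θ ∈ Icc θmin θmax)
    (hw_cont : ContinuousOn w (Icc 0 1))
    (hw_mono : StrictMonoOn w (Icc 0 1))
    (hw_range : ∀ x ∈ Icc (0:ℝ) 1, w x ∈ Icc (0:ℝ) 1)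
    (hw_deriv : ∀ x ∈ Ioo (0:ℝ) 1, HasDerivAt w (w' x) x)
    (hw'_cont : ContinuousOn w' (Ioo 0 1))
    (hkw : 0 < kw) (hkw_le : ∀ x ∈ Ioo (0:ℝ) 1, kw ≤ w' x)
    (hθmin : w 0 / (∫ x in Icc (0:ℝ) 1, (w x - w 0)) < θmin)
    (y : ℝ) (hy : y ∈ Ioo (0:ℝ) 1)
    (hy_max : ∀ z ∈ Icc (0:ℝ) 1,
      (θ * ∫ x in Icc z 1, w x) / (1 + θ * (1 - z)) ≤
        (θ * ∫ x in Icc y 1, w x) / (1 + θ * (1 - y))) :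
    ∀ S : Set ℝ, MeasurableSet S → S ⊆ Icc 0 1 →
      (θmin * kw / 2) / (1 + θmax) * ((volume S).toReal - (1 - y)) ^ 2 ≤
        (θ * ∫ x in Icc y 1, w x) / (1 + θ * (1 - y)) -
          (θ * ∫ x in S, w x) / (1 + θ * (volume S).toReal) :=
  stmt6_general w w' θmin θmax θ kw hθmin_pos hθ hw_cont hw_mono hw_deriv hkw hkw_le y hy hy_max
end

section
/- In the setting of the previous statement, y(θ) is strictly increasing in θ on [θ_min, θ_max]: if θ < θ', then y(θ) < y(θ'). -/
/-!
Clearing the denominator and subtracting `θ (1 - y) w y` from both sides turns the defining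
equation of `y(θ)` into `θ · I(y) = w y`, where `I(y) = ∫_y¹ (w x - w y) dx` is
`tailExcess w 1 y`. For increasing `w`, `I` is positive and nonincreasing, while `w` is strictly
increasing; so `θ < θ'` and `y(θ') ≤ y(θ)` would give
`w (y θ) = θ I(y θ) < θ' I(y θ) ≤ θ' I(y θ') = w (y θ') ≤ w (y θ)`.
-/

open MeasureTheory Set

noncomputable def tailExcess (w : ℝ → ℝ) (b y : ℝ) : ℝ := ∫ x in Icc y b, (w x - w y)

section TailExcess

variable {w : ℝ → ℝ} {a b y z θ : ℝ}

lemma MonotoneOn.integrableOn_Icc_of_le (hw : MonotoneOn w (Icc a b)) (ha : a ≤ y) :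
    IntegrableOn w (Icc y b) :=
  (hw.integrableOn_isCompact isCompact_Icc).mono_set (Icc_subset_Icc ha le_rfl)

lemma MonotoneOn.integrableOn_Icc_sub_const (hw : MonotoneOn w (Icc a b)) (ha : a ≤ y) (c : ℝ) :
    IntegrableOn (fun x => w x - c) (Icc y b) :=
  (hw.integrableOn_Icc_of_le ha).sub (integrableOn_const (by simp))

lemma setIntegral_Icc_const_of_le {c : ℝ} (hyb : y ≤ b) :
    ∫ _ in Icc y b, c = (b - y) * c := by
  rw [setIntegral_const, Real.volume_real_Icc_of_le hyb, smul_eq_mul]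

lemma tailExcess_eq (hw : IntegrableOn w (Icc y b)) (hyb : y ≤ b) :
    tailExcess w b y = (∫ x in Icc y b, w x) - (b - y) * w y := by
  rw [tailExcess, integral_sub hw (integrableOn_const (by simp)), setIntegral_Icc_const_of_le hyb]

lemma setIntegral_Icc_sub_le_tailExcess (hw : MonotoneOn w (Icc a b)) (hy : y ∈ Icc a b)
    (hyz : y ≤ z) : ∫ x in Icc z b, (w x - w y) ≤ tailExcess w b y := by
  refine setIntegral_mono_set (hw.integrableOn_Icc_sub_const hy.1 _) ?_
    (Icc_subset_Icc hyz le_rfl).eventuallyLE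
  filter_upwards [ae_restrict_mem measurableSet_Icc] with x hx
  exact sub_nonneg.2 (hw hy ⟨hy.1.trans hx.1, hx.2⟩ hx.1)

lemma tailExcess_antitoneOn (hw : MonotoneOn w (Icc a b)) :
    AntitoneOn (tailExcess w b) (Icc a b) := by
  intro y hy z hz hyz
  calc tailExcess w b z ≤ ∫ x in Icc z b, (w x - w y) :=
        setIntegral_mono_on (hw.integrableOn_Icc_sub_const hz.1 _)
          (hw.integrableOn_Icc_sub_const hz.1 _) measurableSet_Icc
          fun x _ => sub_le_sub_left (hw hy hz hyz) _
    _ ≤ tailExcess w b y := setIntegral_Icc_sub_le_tailExcess hw hy hyz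

lemma tailExcess_pos (hw : StrictMonoOn w (Icc a b)) (hy : y ∈ Ico a b) :
    0 < tailExcess w b y := by
  obtain ⟨m, hym, hmb⟩ := exists_between hy.2
  have hyI : y ∈ Icc a b := Ico_subset_Icc_self hy
  have hmI : m ∈ Icc a b := ⟨hy.1.trans hym.le, hmb.le⟩
  calc 0 < (b - m) * (w m - w y) := mul_pos (by linarith) (sub_pos.2 (hw hyI hmI hym))
    _ = ∫ _ in Icc m b, (w m - w y) := (setIntegral_Icc_const_of_le hmb.le).symm
    _ ≤ ∫ x in Icc m b, (w x - w y) :=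
        setIntegral_mono_on (integrableOn_const (by simp))
          (hw.monotoneOn.integrableOn_Icc_sub_const hmI.1 _) measurableSet_Icc
          fun x hx => sub_le_sub_right (hw.monotoneOn hmI ⟨hmI.1.trans hx.1, hx.2⟩ hx.1) _
    _ ≤ tailExcess w b y := setIntegral_Icc_sub_le_tailExcess hw.monotoneOn hyI hym.le

lemma mul_tailExcess_eq_of_div_eq (hw : IntegrableOn w (Icc y b)) (hyb : y ≤ b) (hθ : 0 ≤ θ)
    (h : (θ * ∫ x in Icc y b, w x) / (1 + θ * (b - y)) = w y) :
    θ * tailExcess w b y = w y := by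
  have hden : 0 < 1 + θ * (b - y) := by nlinarith
  rw [div_eq_iff hden.ne'] at h
  rw [tailExcess_eq hw hyb]
  linear_combination h

end TailExcess

theorem stmt7_general (w : ℝ → ℝ) (θmin θmax : ℝ)
    (hθmin_pos : 0 < θmin)
    (hw_mono : StrictMonoOn w (Icc 0 1))
    (yfun : ℝ → ℝ)
    (hy : ∀ θ ∈ Icc θmin θmax, yfun θ ∈ Ioo (0:ℝ) 1 ∧
      (θ * ∫ x in Icc (yfun θ) 1, w x) / (1 + θ * (1 - yfun θ)) = w (yfun θ)) :
    StrictMonoOn yfun (Icc θmin θmax) := by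
  have hfix : ∀ θ ∈ Icc θmin θmax, θ * tailExcess w 1 (yfun θ) = w (yfun θ) :=
    fun θ hθ => mul_tailExcess_eq_of_div_eq
      (hw_mono.monotoneOn.integrableOn_Icc_of_le (hy θ hθ).1.1.le)
      (hy θ hθ).1.2.le (hθmin_pos.le.trans hθ.1) (hy θ hθ).2
  intro θ hθ θ' hθ' hlt
  by_contra! hle
  have hyI := Ioo_subset_Icc_self (hy θ hθ).1
  have hyI' := Ioo_subset_Icc_self (hy θ' hθ').1
  have hpos : 0 < tailExcess w 1 (yfun θ) :=
    tailExcess_pos hw_mono (Ioo_subset_Ico_self (hy θ hθ).1)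
  have hanti : tailExcess w 1 (yfun θ) ≤ tailExcess w 1 (yfun θ') :=
    tailExcess_antitoneOn hw_mono.monotoneOn hyI' hyI hle
  have hθ'0 : 0 ≤ θ' := hθmin_pos.le.trans hθ'.1
  have : w (yfun θ) < w (yfun θ) :=
    calc w (yfun θ) = θ * tailExcess w 1 (yfun θ) := (hfix θ hθ).symm
      _ < θ' * tailExcess w 1 (yfun θ) := mul_lt_mul_of_pos_right hlt hpos
      _ ≤ θ' * tailExcess w 1 (yfun θ') := mul_le_mul_of_nonneg_left hanti hθ'0
      _ = w (yfun θ') := hfix θ' hθ'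
      _ ≤ w (yfun θ) := hw_mono.monotoneOn hyI' hyI hle
  exact lt_irrefl _ this

theorem stmt7 (w : ℝ → ℝ) (θmin θmax : ℝ)
    (hθmin_pos : 0 < θmin) (hθlt : θmin < θmax)
    (hw_cont : ContinuousOn w (Icc 0 1))
    (hw_mono : StrictMonoOn w (Icc 0 1))
    (hw_range : ∀ x ∈ Icc (0:ℝ) 1, w x ∈ Icc (0:ℝ) 1)
    (hθmin : w 0 / (∫ x in Icc (0:ℝ) 1, (w x - w 0)) < θmin)
    (yfun : ℝ → ℝ)
    (hy : ∀ θ ∈ Icc θmin θmax, yfun θ ∈ Ioo (0:ℝ) 1 ∧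
      (θ * ∫ x in Icc (yfun θ) 1, w x) / (1 + θ * (1 - yfun θ)) = w (yfun θ)) :
    StrictMonoOn yfun (Icc θmin θmax) :=
  stmt7_general w θmin θmax hθmin_pos hw_mono yfun hy
end

section
/- For every ρ ∈ [0,1] let S_ρ be a maximizer of I(S,ρ) = ∫_S v(x)(w(x)−ρ)dx over Borel sets S with vol(S) ≤ c, and set g(ρ) := I(S_ρ, ρ). Then g is non-increasing and Lipschitz continuous on [0,1] with Lipschitz constant ∫₀¹ v(x)dx, g(0) ≥ 0, g(1) = 0, and there is a unique ρ* ∈ [0,1] with g(ρ*) = ρ*. Moreover r(S_{ρ*}, v) = max{r(S,v) : S Borel, vol(S) ≤ c}. -/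
open MeasureTheory Set

lemma my_int_aux (v w : ℝ → ℝ) (hv_int : IntegrableOn v (Icc 0 1))
    (hv_nonneg : ∀ x, 0 ≤ v x)
    (hw_meas : Measurable w)
    (hw_range : ∀ x ∈ Icc (0:ℝ) 1, w x ∈ Icc (0:ℝ) 1)
    (ρ : ℝ) (S : Set ℝ) (hS : MeasurableSet S) (hSsub : S ⊆ Icc 0 1) :
    IntegrableOn (fun x => v x * (w x - ρ)) S := by
  have hvS : IntegrableOn v S := hv_int.mono_set hSsub
  refine Integrable.mono' (hvS.mul_const (1 + |ρ|)) ?_ ?_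
  · exact hvS.aestronglyMeasurable.mul ((hw_meas.sub measurable_const).aestronglyMeasurable)
  · filter_upwards [ae_restrict_mem hS] with x hx
    have hw := hw_range x (hSsub hx)
    simp only [mem_Icc] at hw
    rw [Real.norm_eq_abs, abs_mul, abs_of_nonneg (hv_nonneg x)]
    have h1 : |w x - ρ| ≤ 1 + |ρ| := by
      calc |w x - ρ| ≤ |w x| + |ρ| := abs_sub _ _
        _ ≤ 1 + |ρ| := by rw [abs_of_nonneg hw.1]; linarith [hw.2]
    exact mul_le_mul_of_nonneg_left h1 (hv_nonneg x)

lemma my_split (v w : ℝ → ℝ) (hv_int : IntegrableOn v (Icc 0 1))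
    (hv_nonneg : ∀ x, 0 ≤ v x)
    (hw_meas : Measurable w)
    (hw_range : ∀ x ∈ Icc (0:ℝ) 1, w x ∈ Icc (0:ℝ) 1)
    (ρ : ℝ) (S : Set ℝ) (hS : MeasurableSet S) (hSsub : S ⊆ Icc 0 1) :
    ∫ x in S, v x * (w x - ρ) = (∫ x in S, v x * w x) - ρ * ∫ x in S, v x := by
  have hvS : IntegrableOn v S := hv_int.mono_set hSsub
  have h1 : IntegrableOn (fun x => v x * w x) S := by
    have := my_int_aux v w hv_int hv_nonneg hw_meas hw_range 0 S hS hSsub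
    simpa using this
  have h2 : IntegrableOn (fun x => ρ * v x) S := hvS.const_mul ρ
  have : (fun x => v x * (w x - ρ)) = fun x => v x * w x - ρ * v x := by
    funext x; ring
  rw [this, integral_sub h1 h2, integral_const_mul]

theorem stmt10 (v w : ℝ → ℝ) (c : ℝ) (hc : c ∈ Ioc (0:ℝ) 1)
    (hv_int : IntegrableOn v (Icc 0 1))
    (hv_nonneg : ∀ x, 0 ≤ v x)
    (hv_bdd : ∃ M : ℝ, ∀ x ∈ Icc (0:ℝ) 1, v x ≤ M)
    (hw_meas : Measurable w)
    (hw_range : ∀ x ∈ Icc (0:ℝ) 1, w x ∈ Icc (0:ℝ) 1)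
    (Sρ : ℝ → Set ℝ)
    (hSρ : ∀ ρ ∈ Icc (0:ℝ) 1, MeasurableSet (Sρ ρ) ∧ Sρ ρ ⊆ Icc 0 1 ∧
      (volume (Sρ ρ)).toReal ≤ c ∧
      ∀ S : Set ℝ, MeasurableSet S → S ⊆ Icc 0 1 → (volume S).toReal ≤ c →
        (∫ x in S, v x * (w x - ρ)) ≤ ∫ x in Sρ ρ, v x * (w x - ρ))
    (g : ℝ → ℝ)
    (hg : ∀ ρ, g ρ = ∫ x in Sρ ρ, v x * (w x - ρ)) :
    AntitoneOn g (Icc 0 1) ∧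
    (∀ ρ₁ ∈ Icc (0:ℝ) 1, ∀ ρ₂ ∈ Icc (0:ℝ) 1,
      |g ρ₁ - g ρ₂| ≤ (∫ x in Icc (0:ℝ) 1, v x) * |ρ₁ - ρ₂|) ∧
    0 ≤ g 0 ∧ g 1 = 0 ∧
    ∃ ρstar ∈ Icc (0:ℝ) 1, g ρstar = ρstar ∧
      (∀ ρ ∈ Icc (0:ℝ) 1, g ρ = ρ → ρ = ρstar) ∧
      IsGreatest {r : ℝ | ∃ S : Set ℝ, MeasurableSet S ∧ S ⊆ Icc 0 1 ∧
          (volume S).toReal ≤ c ∧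
          (∫ x in S, v x * w x) / (1 + ∫ x in S, v x) = r}
        ((∫ x in Sρ ρstar, v x * w x) / (1 + ∫ x in Sρ ρstar, v x)) := by
  set L := ∫ x in Icc (0:ℝ) 1, v x with hLdef
  have hL0 : 0 ≤ L := setIntegral_nonneg measurableSet_Icc (fun x _ => hv_nonneg x)
  have hbnd : ∀ S : Set ℝ, MeasurableSet S → S ⊆ Icc 0 1 →
      0 ≤ (∫ x in S, v x) ∧ (∫ x in S, v x) ≤ L := by
    intro S hS hsub
    refine ⟨setIntegral_nonneg hS (fun x _ => hv_nonneg x), ?_⟩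
    exact setIntegral_mono_set hv_int
      (Filter.Eventually.of_forall fun x => hv_nonneg x) hsub.eventuallyLE
  -- key : value of I(Sρ ρ, σ) in terms of g ρ
  have key : ∀ ρ ∈ Icc (0:ℝ) 1, ∀ σ : ℝ,
      (∫ x in Sρ ρ, v x * (w x - σ)) = g ρ + (ρ - σ) * ∫ x in Sρ ρ, v x := by
    intro ρ hρ σ
    obtain ⟨hm, hsub, -, -⟩ := hSρ ρ hρ
    rw [hg ρ, my_split v w hv_int hv_nonneg hw_meas hw_range σ _ hm hsub,
        my_split v w hv_int hv_nonneg hw_meas hw_range ρ _ hm hsub]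
    ring
  -- optimality of Sρ ρ
  have opt : ∀ ρ ∈ Icc (0:ℝ) 1, ∀ ρ' ∈ Icc (0:ℝ) 1,
      (∫ x in Sρ ρ', v x * (w x - ρ)) ≤ g ρ := by
    intro ρ hρ ρ' hρ'
    obtain ⟨hm, hsub, hcap, -⟩ := hSρ ρ' hρ'
    rw [hg ρ]
    exact (hSρ ρ hρ).2.2.2 _ hm hsub hcap
  -- antitone
  have hanti : AntitoneOn g (Icc 0 1) := by
    intro ρ₁ h₁ ρ₂ h₂ h12
    have hk := key ρ₂ h₂ ρ₁
    have ho := opt ρ₁ h₁ ρ₂ h₂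
    have hb := hbnd _ (hSρ ρ₂ h₂).1 (hSρ ρ₂ h₂).2.1
    nlinarith [hb.1]
  -- one-sided Lipschitz
  have lip1 : ∀ ρ₁ ∈ Icc (0:ℝ) 1, ∀ ρ₂ ∈ Icc (0:ℝ) 1,
      g ρ₁ - g ρ₂ ≤ L * |ρ₁ - ρ₂| := by
    intro ρ₁ h₁ ρ₂ h₂
    have hk := key ρ₁ h₁ ρ₂
    have ho := opt ρ₂ h₂ ρ₁ h₁
    have hb := hbnd _ (hSρ ρ₁ h₁).1 (hSρ ρ₁ h₁).2.1
    have h1 : g ρ₁ - g ρ₂ ≤ (ρ₂ - ρ₁) * ∫ x in Sρ ρ₁, v x := by linarith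
    have h2 : (ρ₂ - ρ₁) * (∫ x in Sρ ρ₁, v x) ≤ |ρ₁ - ρ₂| * (∫ x in Sρ ρ₁, v x) := by
      apply mul_le_mul_of_nonneg_right _ hb.1
      rw [abs_sub_comm]
      exact le_abs_self _
    have h3 : |ρ₁ - ρ₂| * (∫ x in Sρ ρ₁, v x) ≤ |ρ₁ - ρ₂| * L :=
      mul_le_mul_of_nonneg_left hb.2 (abs_nonneg _)
    nlinarith
  have hlip : ∀ ρ₁ ∈ Icc (0:ℝ) 1, ∀ ρ₂ ∈ Icc (0:ℝ) 1,
      |g ρ₁ - g ρ₂| ≤ L * |ρ₁ - ρ₂| := by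
    intro ρ₁ h₁ ρ₂ h₂
    rw [abs_sub_le_iff]
    constructor
    · exact lip1 ρ₁ h₁ ρ₂ h₂
    · rw [abs_sub_comm]; exact lip1 ρ₂ h₂ ρ₁ h₁
  -- g ρ ≥ 0 for all ρ in Icc (empty competitor)
  have hge0 : ∀ ρ ∈ Icc (0:ℝ) 1, 0 ≤ g ρ := by
    intro ρ hρ
    have := (hSρ ρ hρ).2.2.2 ∅ MeasurableSet.empty (empty_subset _)
      (by simp [hc.1.le])
    simpa [hg ρ] using this
  have hg0 : 0 ≤ g 0 := hge0 0 ⟨le_refl _, zero_le_one⟩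
  -- g 1 = 0
  have hg1 : g 1 = 0 := by
    have h1 : (1:ℝ) ∈ Icc (0:ℝ) 1 := ⟨zero_le_one, le_refl _⟩
    obtain ⟨hm, hsub, -, -⟩ := hSρ 1 h1
    have hle : g 1 ≤ 0 := by
      rw [hg 1]
      apply setIntegral_nonpos hm
      intro x hx
      have hw := hw_range x (hsub hx)
      have := hv_nonneg x
      nlinarith [hw.2]
    linarith [hge0 1 h1]
  -- fixed point existence
  have hcont : ContinuousOn (fun ρ => g ρ - ρ) (Icc 0 1) := by
    have : LipschitzOnWith (Real.toNNReal (L + 1)) (fun ρ => g ρ - ρ) (Icc 0 1) := by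
      apply LipschitzOnWith.of_dist_le_mul
      intro x hx y hy
      rw [Real.dist_eq, Real.dist_eq, Real.coe_toNNReal _ (by linarith)]
      have h1 : |(g x - x) - (g y - y)| ≤ |g x - g y| + |x - y| := by
        have := abs_sub (g x - g y) (x - y)
        have heq : (g x - x) - (g y - y) = (g x - g y) - (x - y) := by ring
        rw [heq]; exact this
      have h2 := hlip x hx y hy
      nlinarith [abs_nonneg (x - y)]
    exact this.continuousOn
  have hiv : (0:ℝ) ∈ (fun ρ => g ρ - ρ) '' Icc 0 1 := by
    apply intermediate_value_Icc' zero_le_one hcont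
    constructor
    · simp [hg1]
    · simpa using hg0
  obtain ⟨ρstar, hρs, hfix⟩ := hiv
  have hfix' : g ρstar = ρstar := by simpa [sub_eq_zero] using hfix
  refine ⟨hanti, hlip, hg0, hg1, ρstar, hρs, hfix', ?_, ?_⟩
  · -- uniqueness
    intro ρ hρ hρfix
    by_contra hne
    rcases lt_or_gt_of_ne hne with h | h
    · have := hanti hρ hρs h.le
      rw [hρfix, hfix'] at this
      linarith
    · have := hanti hρs hρ h.le
      rw [hρfix, hfix'] at this
      linarith
  · -- IsGreatest
    obtain ⟨hm, hsub, hcap, hopt⟩ := hSρ ρstar hρs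
    have hρs0 : 0 ≤ ρstar := hρs.1
    -- ratio of the optimal set equals ρstar
    have hsplit : (∫ x in Sρ ρstar, v x * w x) - ρstar * ∫ x in Sρ ρstar, v x = ρstar := by
      have := my_split v w hv_int hv_nonneg hw_meas hw_range ρstar _ hm hsub
      rw [← this, ← hg ρstar, hfix']
    have hpos : 0 < 1 + ∫ x in Sρ ρstar, v x := by
      linarith [(hbnd _ hm hsub).1]
    have hratio : (∫ x in Sρ ρstar, v x * w x) / (1 + ∫ x in Sρ ρstar, v x) = ρstar := by
      rw [div_eq_iff (ne_of_gt hpos)]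
      linarith
    constructor
    · exact ⟨Sρ ρstar, hm, hsub, hcap, rfl⟩
    · rintro r ⟨S, hSm, hSsub, hSc, hr⟩
      rw [hratio, ← hr]
      have hposS : 0 < 1 + ∫ x in S, v x := by linarith [(hbnd S hSm hSsub).1]
      rw [div_le_iff₀ hposS]
      have hI : (∫ x in S, v x * (w x - ρstar)) ≤ g ρstar := by
        rw [hg ρstar]; exact hopt S hSm hSsub hSc
      rw [my_split v w hv_int hv_nonneg hw_meas hw_range ρstar S hSm hSsub, hfix'] at hI
      nlinarith
end

section
/- Let c ∈ (0,1], s = 0.8c, δ = 1/2, w(x) = (1−s)(1−δ)/(1−δx) + s, and v₀(x) = s/(c(w(x)−s)) = s(1−δx)/(c(1−s)(1−δ)). Then v₀(x)(w(x)−s) = s/c for all x ∈ [0,1], and the optimal expected revenue under v₀ with capacity constraint vol(S) ≤ c equals s; moreover every Borel set S with vol(S) = c attains this optimum. -/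
/-! On `[0,1]` the valuation `v₀` is chosen so that `v₀ (w - s) = s / c` is constant, hence
`∫_S v₀ w = vol(S) · s / c + s ∫_S v₀` for every `S ⊆ [0,1]`. The revenue is therefore
`(vol(S) · s / c + s I) / (1 + I)` with `I = ∫_S v₀ ≥ 0`, which is at most `s` when
`vol(S) ≤ c`, with equality when `vol(S) = c`. -/

open MeasureTheory Set

section Revenue

variable {α : Type*} [MeasurableSpace α] {μ : Measure α} {S : Set α} {v w : α → ℝ} {s k : ℝ}

theorem setIntegral_mul_eq_of_mul_sub_eq (hS : MeasurableSet S) (hμS : μ S ≠ ⊤)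
    (hv : IntegrableOn v S μ) (h : ∀ x ∈ S, v x * (w x - s) = k) :
    ∫ x in S, v x * w x ∂μ = μ.real S * k + s * ∫ x in S, v x ∂μ := by
  have hpoint : ∀ x ∈ S, v x * w x = k + s * v x := fun x hx => by
    linear_combination h x hx
  rw [setIntegral_congr_fun hS hpoint,
    integral_add (integrableOn_const hμS (C := k)) (hv.const_mul s), setIntegral_const,
    integral_const_mul, smul_eq_mul]

theorem setIntegral_revenue_le (hS : MeasurableSet S) (hμS : μ S ≠ ⊤)
    (hv : IntegrableOn v S μ) (hv0 : ∀ x ∈ S, 0 ≤ v x) (h : ∀ x ∈ S, v x * (w x - s) = k)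
    (hk : μ.real S * k ≤ s) :
    (∫ x in S, v x * w x ∂μ) / (1 + ∫ x in S, v x ∂μ) ≤ s := by
  have hI : 0 ≤ ∫ x in S, v x ∂μ := setIntegral_nonneg hS hv0
  rw [setIntegral_mul_eq_of_mul_sub_eq hS hμS hv h, div_le_iff₀ (by linarith)]
  linarith

theorem setIntegral_revenue_eq (hS : MeasurableSet S) (hμS : μ S ≠ ⊤)
    (hv : IntegrableOn v S μ) (hv0 : ∀ x ∈ S, 0 ≤ v x) (h : ∀ x ∈ S, v x * (w x - s) = k)
    (hk : μ.real S * k = s) :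
    (∫ x in S, v x * w x ∂μ) / (1 + ∫ x in S, v x ∂μ) = s := by
  have hI : 0 ≤ ∫ x in S, v x ∂μ := setIntegral_nonneg hS hv0
  rw [setIntegral_mul_eq_of_mul_sub_eq hS hμS hv h, div_eq_iff (by linarith), ← hk]
  ring

end Revenue

section ValuationModel

variable {c s δ : ℝ} {w v0 : ℝ → ℝ}

theorem one_sub_mul_pos_of_mem_Icc {δ x : ℝ} (hδ : δ < 1) (hx : x ∈ Icc (0 : ℝ) 1) :
    0 < 1 - δ * x := by
  obtain ⟨hx0, hx1⟩ := hx
  rcases le_total 0 δ with hδ0 | hδ0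
  · nlinarith [mul_le_mul_of_nonneg_left hx1 hδ0]
  · nlinarith [mul_nonpos_of_nonpos_of_nonneg hδ0 hx0]

theorem w_sub_pos_of_mem_Icc (hw : ∀ x, w x = (1 - s) * (1 - δ) / (1 - δ * x) + s)
    (hs : s < 1) (hδ : δ < 1) {x : ℝ} (hx : x ∈ Icc (0 : ℝ) 1) : 0 < w x - s := by
  rw [hw x, add_sub_cancel_right]
  exact div_pos (mul_pos (by linarith) (by linarith)) (one_sub_mul_pos_of_mem_Icc hδ hx)

theorem eqOn_v0_affine (hw : ∀ x, w x = (1 - s) * (1 - δ) / (1 - δ * x) + s)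
    (hv0 : ∀ x, v0 x = s / (c * (w x - s))) (hs : s < 1) (hδ : δ < 1) :
    EqOn v0 (fun x => s * (1 - δ * x) / (c * (1 - s) * (1 - δ))) (Icc 0 1) := by
  intro x hx
  have hx' : 1 - δ * x ≠ 0 := (one_sub_mul_pos_of_mem_Icc hδ hx).ne'
  have hs' : 1 - s ≠ 0 := by linarith
  have hδ' : 1 - δ ≠ 0 := by linarith
  rw [hv0 x, hw x, add_sub_cancel_right]
  field_simp

end ValuationModel

theorem stmt11 (c s δ : ℝ) (hc : c ∈ Ioc (0:ℝ) 1)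
    (hs : s = 0.8 * c) (hδ : δ = 1 / 2)
    (w v0 : ℝ → ℝ)
    (hw : ∀ x, w x = (1 - s) * (1 - δ) / (1 - δ * x) + s)
    (hv0 : ∀ x, v0 x = s / (c * (w x - s))) :
    (∀ x ∈ Icc (0:ℝ) 1, v0 x * (w x - s) = s / c) ∧
    IsGreatest {r : ℝ | ∃ S : Set ℝ, MeasurableSet S ∧ S ⊆ Icc 0 1 ∧
        (volume S).toReal ≤ c ∧
        (∫ x in S, v0 x * w x) / (1 + ∫ x in S, v0 x) = r} s ∧
    ∀ S : Set ℝ, MeasurableSet S → S ⊆ Icc 0 1 → (volume S).toReal = c →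
      (∫ x in S, v0 x * w x) / (1 + ∫ x in S, v0 x) = s := by
  obtain ⟨hc0, hc1⟩ := hc
  have hs0 : 0 < s := by rw [hs]; linarith
  have hs1 : s < 1 := by rw [hs]; linarith
  have hδ1 : δ < 1 := by rw [hδ]; norm_num
  have hpos := fun x (hx : x ∈ Icc (0:ℝ) 1) => w_sub_pos_of_mem_Icc hw hs1 hδ1 hx
  have hpt : ∀ x ∈ Icc (0:ℝ) 1, v0 x * (w x - s) = s / c := fun x hx => by
    rw [hv0 x]; field_simp [(hpos x hx).ne']
  have hnonneg : ∀ x ∈ Icc (0:ℝ) 1, 0 ≤ v0 x := fun x hx => by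
    rw [hv0 x]; exact div_nonneg hs0.le (mul_pos hc0 (hpos x hx)).le
  have hint : IntegrableOn v0 (Icc 0 1) :=
    (Continuous.integrableOn_Icc (by fun_prop)).congr_fun (eqOn_v0_affine hw hv0 hs1 hδ1).symm
      measurableSet_Icc
  have hfin : ∀ S ⊆ Icc (0:ℝ) 1, volume S ≠ ⊤ := fun S hS =>
    measure_ne_top_of_subset hS (by simp [Real.volume_Icc])
  have hrev : ∀ S, MeasurableSet S → S ⊆ Icc 0 1 → (volume S).toReal = c →
      (∫ x in S, v0 x * w x) / (1 + ∫ x in S, v0 x) = s := fun S hS hS1 hvol =>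
    setIntegral_revenue_eq hS (hfin S hS1) (hint.mono_set hS1) (fun x hx => hnonneg x (hS1 hx))
      (fun x hx => hpt x (hS1 hx)) (by rw [Measure.real, hvol]; field_simp)
  have hIcc : (volume (Icc 0 c)).toReal = c := by simp [Real.volume_Icc, hc0.le]
  refine ⟨hpt, ⟨⟨Icc 0 c, measurableSet_Icc, Icc_subset_Icc le_rfl hc1, hIcc.le,
    hrev _ measurableSet_Icc (Icc_subset_Icc le_rfl hc1) hIcc⟩, ?_⟩, hrev⟩
  rintro r ⟨S, hS, hS1, hvol, rfl⟩
  refine setIntegral_revenue_le hS (hfin S hS1) (hint.mono_set hS1)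
    (fun x hx => hnonneg x (hS1 hx)) (fun x hx => hpt x (hS1 hx)) ?_
  calc (volume S).toReal * (s / c) ≤ c * (s / c) := by gcongr
    _ = s := by field_simp
end

section
/- Let σ = 0.3, b(y) = (1/(σ√(2π))) exp(−y²/(2σ²)), and for integers i and reals x define τ_i(x) = (c/K) b(2Kx/c − 2i + 1). Then for any finite index set I ⊆ ℤ and any x ∈ ℝ, ∑_{i∈I} τ_i(x) ≤ H·(c/K), where H = (1/(σ√(2π))) ∑_{n∈ℤ} exp(−2n²/σ²). -/
/-!
Writing `s = (2Kx/c + 1)/2`, the sum is `(c/K) C ∑_{i ∈ I} exp(-(200/9)(i - s)²)` and `H` is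
`C ∑_n exp(-(200/9) n²)`, so it suffices that a periodised Gaussian is maximal at the origin.
By Poisson summation its Fourier coefficients are positive Gaussians, so the triangle inequality
bounds its value at any shift by its value at `s = 0`.
-/

open Real Complex

lemma summable_exp_neg_quadratic_int {a : ℝ} (ha : 0 < a) (b : ℝ) :
    Summable fun n : ℤ ↦ rexp (-π * a * n ^ 2 + 2 * π * b * n) := by
  have h := ((summable_jacobiTheta₂_term_iff (-I * b) (I * a)).2 (by simpa using ha)).norm
  simp_rw [norm_jacobiTheta₂_term] at h
  convert h using 3 with n
  simp
  ring

lemma tsum_exp_neg_quadratic_int_le {a : ℝ} (ha : 0 < a) (b : ℝ) :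
    ∑' n : ℤ, rexp (-π * a * n ^ 2 + 2 * π * b * n) ≤
      rexp (π * b ^ 2 / a) * ∑' n : ℤ, rexp (-π * a * n ^ 2) := by
  have hdual : ∀ n : ℤ, ‖cexp (-π / a * (n + I * b) ^ 2)‖ =
      rexp (π * b ^ 2 / a) * rexp (-π / a * n ^ 2) := by
    intro n
    rw [Complex.norm_exp, ← Real.exp_add]
    congr 1
    have hsplit : (-π / a * (n + I * b) ^ 2 : ℂ) = ((-π / a * (n ^ 2 - b ^ 2) : ℝ) : ℂ) +
        ((-π / a * 2 * n * b : ℝ) : ℂ) * I := by push_cast; ring_nf; rw [I_sq]; ring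
    rw [hsplit, add_re, ofReal_re, re_ofReal_mul, I_re]
    field_simp
    ring
  have hsummable : Summable fun n : ℤ ↦ ‖cexp (-π / a * (n + I * b) ^ 2)‖ := by
    simp_rw [hdual]
    refine Summable.mul_left _ ?_
    simpa [div_eq_mul_inv, mul_comm] using summable_exp_neg_quadratic_int (inv_pos.2 ha) 0
  have hpoisson := Complex.tsum_exp_neg_quadratic (a := a) (by simpa using ha) b
  calc ∑' n : ℤ, rexp (-π * a * n ^ 2 + 2 * π * b * n)
      = ‖∑' n : ℤ, cexp (-π * a * n ^ 2 + 2 * π * b * n)‖ := by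
        rw [← Real.norm_of_nonneg (tsum_nonneg fun n ↦ (Real.exp_pos _).le),
          ← Complex.norm_real, ofReal_tsum]
        push_cast
        rfl
    _ = ‖1 / (a : ℂ) ^ (1 / 2 : ℂ) * ∑' n : ℤ, cexp (-π / a * (n + I * b) ^ 2)‖ := by
        rw [hpoisson]
    _ ≤ 1 / a ^ (1 / 2 : ℝ) * ∑' n : ℤ, ‖cexp (-π / a * (n + I * b) ^ 2)‖ := by
        have hroot : (a : ℂ) ^ (1 / 2 : ℂ) = ((a ^ (1 / 2 : ℝ) : ℝ) : ℂ) := by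
          rw [ofReal_cpow ha.le]; push_cast; rfl
        rw [norm_mul, hroot, ← ofReal_one, ← ofReal_div, Complex.norm_real,
          Real.norm_of_nonneg (by positivity)]
        exact mul_le_mul_of_nonneg_left (norm_tsum_le_tsum_norm hsummable) (by positivity)
    _ = rexp (π * b ^ 2 / a) * ∑' n : ℤ, rexp (-π * a * n ^ 2) := by
        simp_rw [hdual, tsum_mul_left, Real.tsum_exp_neg_mul_int_sq ha]
        ring

lemma exp_neg_mul_sub_sq_eq (α s x : ℝ) :
    rexp (-α * (x - s) ^ 2) =
      rexp (-α * s ^ 2) * rexp (-π * (α / π) * x ^ 2 + 2 * π * (α * s / π) * x) := by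
  rw [← Real.exp_add]
  congr 1
  field_simp
  ring

lemma summable_exp_neg_mul_int_sub_sq {α : ℝ} (hα : 0 < α) (s : ℝ) :
    Summable fun n : ℤ ↦ rexp (-α * (n - s) ^ 2) := by
  simp_rw [exp_neg_mul_sub_sq_eq α s]
  exact (summable_exp_neg_quadratic_int (by positivity) _).mul_left _

theorem tsum_exp_neg_mul_int_sub_sq_le {α : ℝ} (hα : 0 < α) (s : ℝ) :
    ∑' n : ℤ, rexp (-α * (n - s) ^ 2) ≤ ∑' n : ℤ, rexp (-α * n ^ 2) := by
  have hbound := tsum_exp_neg_quadratic_int_le (a := α / π) (by positivity) (α * s / π)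
  simp_rw [exp_neg_mul_sub_sq_eq α s, tsum_mul_left]
  calc rexp (-α * s ^ 2) * ∑' n : ℤ, rexp (-π * (α / π) * n ^ 2 + 2 * π * (α * s / π) * n)
      ≤ rexp (-α * s ^ 2) * (rexp (π * (α * s / π) ^ 2 / (α / π)) *
          ∑' n : ℤ, rexp (-π * (α / π) * n ^ 2)) :=
        mul_le_mul_of_nonneg_left hbound (Real.exp_pos _).le
    _ = ∑' n : ℤ, rexp (-α * n ^ 2) := by
        rw [← mul_assoc, ← Real.exp_add]
        have hcancel : -α * s ^ 2 + π * (α * s / π) ^ 2 / (α / π) = 0 := by field_simp; ring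
        simp only [hcancel, Real.exp_zero, one_mul]
        congr 1; ext n; congr 1; field_simp

theorem sum_exp_neg_mul_sub_sq_le_tsum {α : ℝ} (hα : 0 < α) (s : ℝ) (I : Finset ℤ) :
    ∑ i ∈ I, rexp (-α * (i - s) ^ 2) ≤ ∑' n : ℤ, rexp (-α * n ^ 2) :=
  ((summable_exp_neg_mul_int_sub_sq hα s).sum_le_tsum I fun _ _ ↦ (Real.exp_pos _).le).trans
    (tsum_exp_neg_mul_int_sub_sq_le hα s)

theorem stmt14_general (c : ℝ) (K : ℕ) (hc : 0 < c)
    (σ : ℝ) (hσ : σ = 0.3)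
    (b : ℝ → ℝ)
    (hb : ∀ y, b y = 1 / (σ * Real.sqrt (2 * Real.pi)) * Real.exp (-(y ^ 2) / (2 * σ ^ 2)))
    (τ : ℤ → ℝ → ℝ)
    (hτ : ∀ (i : ℤ) (x : ℝ), τ i x = c / K * b (2 * K * x / c - 2 * i + 1))
    (H : ℝ)
    (hH : H = 1 / (σ * Real.sqrt (2 * Real.pi)) *
      ∑' n : ℤ, Real.exp (-(2 * (n : ℝ) ^ 2) / σ ^ 2))
    (I : Finset ℤ) (x : ℝ) :
    ∑ i ∈ I, τ i x ≤ H * (c / K) := by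
  subst hσ
  set C := 1 / ((0.3 : ℝ) * Real.sqrt (2 * Real.pi))
  set s := (2 * K * x / c + 1) / 2 with hs
  have hτ' : ∀ i : ℤ, τ i x = c / K * C * rexp (-(200 / 9) * (i - s) ^ 2) := by
    intro i
    rw [hτ, hb, hs]
    ring_nf
  have hH' : H = C * ∑' n : ℤ, rexp (-(200 / 9) * n ^ 2) := by
    simp_rw [hH]
    ring_nf
  rw [Finset.sum_congr rfl fun i _ ↦ hτ' i, ← Finset.mul_sum, hH']
  calc c / K * C * ∑ i ∈ I, rexp (-(200 / 9) * (i - s) ^ 2)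
      ≤ c / K * C * ∑' n : ℤ, rexp (-(200 / 9) * n ^ 2) :=
        mul_le_mul_of_nonneg_left (sum_exp_neg_mul_sub_sq_le_tsum (by norm_num) s I)
          (by positivity)
    _ = C * (∑' n : ℤ, rexp (-(200 / 9) * n ^ 2)) * (c / K) := by ring

theorem stmt14 (c : ℝ) (K : ℕ) (hc : 0 < c) (hK : 2 ≤ K)
    (σ : ℝ) (hσ : σ = 0.3)
    (b : ℝ → ℝ)
    (hb : ∀ y, b y = 1 / (σ * Real.sqrt (2 * Real.pi)) * Real.exp (-(y ^ 2) / (2 * σ ^ 2)))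
    (τ : ℤ → ℝ → ℝ)
    (hτ : ∀ (i : ℤ) (x : ℝ), τ i x = c / K * b (2 * K * x / c - 2 * i + 1))
    (H : ℝ)
    (hH : H = 1 / (σ * Real.sqrt (2 * Real.pi)) *
      ∑' n : ℤ, Real.exp (-(2 * (n : ℝ) ^ 2) / σ ^ 2))
    (I : Finset ℤ) (x : ℝ) :
    ∑ i ∈ I, τ i x ≤ H * (c / K) :=
  stmt14_general c K hc σ hσ b hb τ hτ H hH I x
end

section
/- In the capacitated continuous MNL model, the optimal revenues under two preference functions are close when the functions are close in L¹: if ρ* is the optimal revenue under v and ρ̂ is the optimal revenue under v̂ (both with capacity c), then |ρ* − ρ̂| ≤ ‖v − v̂‖₁. -/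
/-!
For a fixed assortment `S` write `ρ = r(S, v)`. Clearing denominators gives
`r(S, v) - r(S, v̂) = (∫_S (v - v̂)(w - ρ)) / (1 + ∫_S v̂)`, and since `0 ≤ w, ρ ≤ 1` on `S`
we have `|w - ρ| ≤ 1`, so `|r(S, v) - r(S, v̂)| ≤ ∫_S |v - v̂| ≤ ‖v - v̂‖₁`. Evaluating this at an
optimal assortment for `v` (resp. `v̂`) bounds `ρ* - ρ̂` (resp. `ρ̂ - ρ*`).
-/

open MeasureTheory Set

noncomputable def mnlRevenue {α : Type*} [MeasurableSpace α] (μ : Measure α) (v w : α → ℝ)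
    (S : Set α) : ℝ :=
  (∫ x in S, v x * w x ∂μ) / (1 + ∫ x in S, v x ∂μ)

namespace MNLRevenue

variable {α : Type*} [MeasurableSpace α] {μ : Measure α} {S : Set α} {v v' w : α → ℝ}

lemma integrableOn_mul (hv : IntegrableOn v S μ) (hw : AEStronglyMeasurable w (μ.restrict S))
    (hS : MeasurableSet S) (hw01 : ∀ x ∈ S, w x ∈ Icc (0 : ℝ) 1) :
    IntegrableOn (fun x => v x * w x) S μ :=
  hv.mul_bdd hw ((ae_restrict_iff' hS).2 <| .of_forall fun x hx => by
    rw [Real.norm_eq_abs, abs_le]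
    exact ⟨by linarith [(hw01 x hx).1], (hw01 x hx).2⟩)

lemma mnlRevenue_mem_Icc (hv : IntegrableOn v S μ) (hw : AEStronglyMeasurable w (μ.restrict S))
    (hS : MeasurableSet S) (hv0 : ∀ x ∈ S, 0 ≤ v x) (hw01 : ∀ x ∈ S, w x ∈ Icc (0 : ℝ) 1) :
    mnlRevenue μ v w S ∈ Icc (0 : ℝ) 1 := by
  have hB : 0 ≤ ∫ x in S, v x ∂μ := setIntegral_nonneg hS hv0
  have hA : 0 ≤ ∫ x in S, v x * w x ∂μ :=
    setIntegral_nonneg hS fun x hx => mul_nonneg (hv0 x hx) (hw01 x hx).1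
  have hAB : ∫ x in S, v x * w x ∂μ ≤ ∫ x in S, v x ∂μ :=
    setIntegral_mono_on (integrableOn_mul hv hw hS hw01) hv hS fun x hx =>
      mul_le_of_le_one_right (hv0 x hx) (hw01 x hx).2
  exact ⟨div_nonneg hA (by linarith), (div_le_one (by linarith)).2 (by linarith)⟩

lemma mnlRevenue_sub_mnlRevenue (hv : IntegrableOn v S μ) (hv' : IntegrableOn v' S μ)
    (hw : AEStronglyMeasurable w (μ.restrict S)) (hS : MeasurableSet S)
    (hv0 : ∀ x ∈ S, 0 ≤ v x) (hv'0 : ∀ x ∈ S, 0 ≤ v' x) (hw01 : ∀ x ∈ S, w x ∈ Icc (0 : ℝ) 1) :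
    mnlRevenue μ v w S - mnlRevenue μ v' w S =
      (∫ x in S, (v x - v' x) * (w x - mnlRevenue μ v w S) ∂μ) / (1 + ∫ x in S, v' x ∂μ) := by
  set ρ := mnlRevenue μ v w S with hρ
  have hB : 0 ≤ ∫ x in S, v x ∂μ := setIntegral_nonneg hS hv0
  have hB' : 0 ≤ ∫ x in S, v' x ∂μ := setIntegral_nonneg hS hv'0
  have hvw := integrableOn_mul hv hw hS hw01
  have hv'w := integrableOn_mul hv' hw hS hw01
  have hexpand : ∫ x in S, (v x - v' x) * (w x - ρ) ∂μ =
      (∫ x in S, v x * w x ∂μ) - (∫ x in S, v' x * w x ∂μ) -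
        ρ * ((∫ x in S, v x ∂μ) - ∫ x in S, v' x ∂μ) := by
    have hpoint : (fun x => (v x - v' x) * (w x - ρ)) =
        fun x => (v x * w x - v' x * w x) - (v x - v' x) * ρ := by
      ext x; ring
    rw [hpoint, integral_sub (f := fun x => v x * w x - v' x * w x)
        (g := fun x => (v x - v' x) * ρ) (hvw.sub hv'w)
        ((hv.sub hv').mul_const ρ), integral_sub hvw hv'w,
      integral_mul_const, integral_sub hv hv']
    ring
  rw [hexpand, hρ, mnlRevenue, mnlRevenue]
  field_simp
  ring

lemma mnlRevenue_le_add (hv : IntegrableOn v S μ) (hv' : IntegrableOn v' S μ)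
    (hw : AEStronglyMeasurable w (μ.restrict S)) (hS : MeasurableSet S)
    (hv0 : ∀ x ∈ S, 0 ≤ v x) (hv'0 : ∀ x ∈ S, 0 ≤ v' x) (hw01 : ∀ x ∈ S, w x ∈ Icc (0 : ℝ) 1) :
    mnlRevenue μ v w S ≤ mnlRevenue μ v' w S + ∫ x in S, |v x - v' x| ∂μ := by
  set ρ := mnlRevenue μ v w S
  set N := ∫ x in S, (v x - v' x) * (w x - ρ) ∂μ
  have hρ := mnlRevenue_mem_Icc hv hw hS hv0 hw01
  have hB' : 0 ≤ ∫ x in S, v' x ∂μ := setIntegral_nonneg hS hv'0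
  have hN : |N| ≤ ∫ x in S, |v x - v' x| ∂μ := by
    rw [← Real.norm_eq_abs]
    refine norm_integral_le_of_norm_le (hv.sub hv').abs ((ae_restrict_iff' hS).2 <|
      .of_forall fun x hx => ?_)
    have hwρ : |w x - ρ| ≤ 1 :=
      abs_sub_le_iff.2 ⟨by linarith [(hw01 x hx).2, hρ.1], by linarith [(hw01 x hx).1, hρ.2]⟩
    rw [Real.norm_eq_abs, abs_mul]
    exact mul_le_of_le_one_right (abs_nonneg _) hwρ
  have hdiv : N / (1 + ∫ x in S, v' x ∂μ) ≤ |N| :=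
    (div_le_div_of_nonneg_right (le_abs_self N) (by linarith)).trans
      (div_le_self (abs_nonneg N) (by linarith))
  linarith [mnlRevenue_sub_mnlRevenue hv hv' hw hS hv0 hv'0 hw01]

lemma le_add_integral_abs_sub {K : Set α} {C : Set α → Prop} {ρ ρ' : ℝ}
    (hv : IntegrableOn v K μ) (hv' : IntegrableOn v' K μ)
    (hw : AEStronglyMeasurable w (μ.restrict K))
    (hv0 : ∀ x ∈ K, 0 ≤ v x) (hv'0 : ∀ x ∈ K, 0 ≤ v' x) (hw01 : ∀ x ∈ K, w x ∈ Icc (0 : ℝ) 1)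
    (hρ : ρ ∈ {r | ∃ S, MeasurableSet S ∧ S ⊆ K ∧ C S ∧ mnlRevenue μ v w S = r})
    (hρ' : ρ' ∈ upperBounds {r | ∃ S, MeasurableSet S ∧ S ⊆ K ∧ C S ∧ mnlRevenue μ v' w S = r}) :
    ρ ≤ ρ' + ∫ x in K, |v x - v' x| ∂μ := by
  obtain ⟨S, hS, hSK, hCS, rfl⟩ := hρ
  have hlocal : mnlRevenue μ v w S ≤ mnlRevenue μ v' w S + ∫ x in S, |v x - v' x| ∂μ :=
    mnlRevenue_le_add (hv.mono_set hSK) (hv'.mono_set hSK) (hw.mono_set hSK) hS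
      (fun x hx => hv0 x (hSK hx)) (fun x hx => hv'0 x (hSK hx))
      (fun x hx => hw01 x (hSK hx))
  have hSK_int : ∫ x in S, |v x - v' x| ∂μ ≤ ∫ x in K, |v x - v' x| ∂μ :=
    setIntegral_mono_set (hv.sub hv').abs (.of_forall fun x => abs_nonneg _) (.of_forall hSK)
  linarith [hρ' ⟨S, hS, hSK, hCS, rfl⟩]

end MNLRevenue

open MNLRevenue in
theorem stmt17_general (c : ℝ) (w v vhat : ℝ → ℝ)
    (hw_meas : Measurable w)
    (hw_range : ∀ x ∈ Icc (0:ℝ) 1, w x ∈ Icc (0:ℝ) 1)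
    (hv_int : IntegrableOn v (Icc 0 1)) (hv_nonneg : ∀ x, 0 ≤ v x)
    (hvhat_int : IntegrableOn vhat (Icc 0 1)) (hvhat_nonneg : ∀ x, 0 ≤ vhat x)
    (ρstar ρhat : ℝ)
    (hρstar : IsGreatest {r : ℝ | ∃ S : Set ℝ, MeasurableSet S ∧ S ⊆ Icc 0 1 ∧
      (volume S).toReal ≤ c ∧
      (∫ x in S, v x * w x) / (1 + ∫ x in S, v x) = r} ρstar)
    (hρhat : IsGreatest {r : ℝ | ∃ S : Set ℝ, MeasurableSet S ∧ S ⊆ Icc 0 1 ∧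
      (volume S).toReal ≤ c ∧
      (∫ x in S, vhat x * w x) / (1 + ∫ x in S, vhat x) = r} ρhat) :
    |ρstar - ρhat| ≤ ∫ x in Icc (0:ℝ) 1, |v x - vhat x| := by
  have hstar_le : ρstar ≤ ρhat + ∫ x in Icc (0:ℝ) 1, |v x - vhat x| :=
    le_add_integral_abs_sub hv_int hvhat_int hw_meas.aestronglyMeasurable (fun x _ => hv_nonneg x)
      (fun x _ => hvhat_nonneg x) hw_range hρstar.1 hρhat.2
  have hhat_le : ρhat ≤ ρstar + ∫ x in Icc (0:ℝ) 1, |vhat x - v x| :=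
    le_add_integral_abs_sub hvhat_int hv_int hw_meas.aestronglyMeasurable
      (fun x _ => hvhat_nonneg x) (fun x _ => hv_nonneg x) hw_range hρhat.1 hρstar.2
  simp only [abs_sub_comm (vhat _)] at hhat_le
  exact abs_sub_le_iff.2 ⟨by linarith, by linarith⟩

theorem stmt17 (c : ℝ) (hc : c ∈ Ioc (0:ℝ) 1) (w v vhat : ℝ → ℝ)
    (hw_meas : Measurable w)
    (hw_range : ∀ x ∈ Icc (0:ℝ) 1, w x ∈ Icc (0:ℝ) 1)
    (hv_int : IntegrableOn v (Icc 0 1)) (hv_nonneg : ∀ x, 0 ≤ v x)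
    (hvhat_int : IntegrableOn vhat (Icc 0 1)) (hvhat_nonneg : ∀ x, 0 ≤ vhat x)
    (ρstar ρhat : ℝ)
    (hρstar : IsGreatest {r : ℝ | ∃ S : Set ℝ, MeasurableSet S ∧ S ⊆ Icc 0 1 ∧
      (volume S).toReal ≤ c ∧
      (∫ x in S, v x * w x) / (1 + ∫ x in S, v x) = r} ρstar)
    (hρhat : IsGreatest {r : ℝ | ∃ S : Set ℝ, MeasurableSet S ∧ S ⊆ Icc 0 1 ∧
      (volume S).toReal ≤ c ∧
      (∫ x in S, vhat x * w x) / (1 + ∫ x in S, vhat x) = r} ρhat) :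
    |ρstar - ρhat| ≤ ∫ x in Icc (0:ℝ) 1, |v x - vhat x| :=
  stmt17_general c w v vhat hw_meas hw_range hv_int hv_nonneg hvhat_int hvhat_nonneg ρstar ρhat
    hρstar hρhat
end
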